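/- arXiv:1301.6604 — 14 statements merged into one kernel-verified Lean document; each statement's English description precedes it below -/
import Mathlib

section
/- Let y1, y2, y3, a1, a2, a3 be positive real numbers such that y1*y2*y3 = a1*a2*a3, y1+y2+y3 ≥ a1+a2+a3, and y1*y2 + y2*y3 + y1*y3 ≥ a1*a2 + a2*a3 + a1*a3. Then (log y1)^2 + (log y2)^2 + (log y3)^2 ≥ (log a1)^2 + (log a2)^2 + (log a3)^2. -/
/-!
For `x > 0`,
  `(log x)^2 = ∫₀^∞ log ((1 + x t)(x + t) / (x (1 + t)^2)) / t dt`: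
both sides vanish at `x = 1` and have `x`-derivative `2 log x / x`. Summed over the `x_i`, the
integrand is `log (∏ (1 + x_i t) · ∏ (x_i + t) / (∏ x_i · (1 + t)^(2n))) / t`. The coefficients of
the two polynomials `∏ (1 + x_i t)` and `∏ (x_i + t)` in `t` are the elementary symmetric functions
of the `x_i`, so the hypotheses compare the integrands pointwise.
-/

open Real MeasureTheory Set Filter Metric
open scoped Topology

noncomputable def logSqKernel (x t : ℝ) : ℝ :=
  log ((1 + x * t) * (x + t) / (x * (1 + t) ^ 2)) / t

noncomputable def logSqKernelDeriv (x t : ℝ) : ℝ :=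
  (x ^ 2 - 1) / (x * (1 + x * t) * (x + t))

theorem one_add_mul_mul_add_div_eq {x t : ℝ} (hx : 0 < x) (ht : 0 ≤ t) :
    (1 + x * t) * (x + t) / (x * (1 + t) ^ 2) = 1 + t * (x - 1) ^ 2 / (x * (1 + t) ^ 2) := by
  field_simp
  ring

theorem logSqKernel_nonneg {x t : ℝ} (hx : 0 < x) (ht : 0 < t) : 0 ≤ logSqKernel x t := by
  rw [logSqKernel, one_add_mul_mul_add_div_eq hx ht.le]
  exact div_nonneg (log_nonneg (le_add_of_nonneg_right (by positivity))) ht.le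

theorem logSqKernel_le {x t : ℝ} (hx : 0 < x) (ht : 0 < t) :
    logSqKernel x t ≤ (x - 1) ^ 2 / x * (1 + t ^ 2)⁻¹ := by
  have hlog := log_le_sub_one_of_pos (x := 1 + t * (x - 1) ^ 2 / (x * (1 + t) ^ 2))
    (by positivity)
  rw [logSqKernel, one_add_mul_mul_add_div_eq hx ht.le, div_le_iff₀ ht]
  calc _ ≤ t * (x - 1) ^ 2 / (x * (1 + t) ^ 2) := by linarith
    _ ≤ t * (x - 1) ^ 2 / (x * (1 + t ^ 2)) := by gcongr; nlinarith
    _ = _ := by field_simp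

theorem abs_logSqKernelDeriv_le {x t : ℝ} (hx : 0 < x) (ht : 0 ≤ t) :
    |logSqKernelDeriv x t| ≤ (1 + (x ^ 2)⁻¹) * (1 + t ^ 2)⁻¹ := by
  have hden : x * (1 + t ^ 2) ≤ (1 + x * t) * (x + t) := by nlinarith [mul_nonneg ht (sq_nonneg x)]
  have hnum : |x ^ 2 - 1| ≤ x ^ 2 + 1 := abs_le.2 ⟨by nlinarith, by nlinarith⟩
  rw [logSqKernelDeriv, abs_div, abs_of_pos (by positivity : 0 < x * (1 + x * t) * (x + t))]
  calc _ ≤ (x ^ 2 + 1) / (x * (x * (1 + t ^ 2))) := by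
        rw [mul_assoc]; gcongr
    _ = _ := by field_simp

theorem measurable_logSqKernel (x : ℝ) : Measurable (logSqKernel x) := by
  unfold logSqKernel; fun_prop

theorem measurable_logSqKernelDeriv (x : ℝ) : Measurable (logSqKernelDeriv x) := by
  unfold logSqKernelDeriv; fun_prop

theorem integrableOn_logSqKernel {x : ℝ} (hx : 0 < x) : IntegrableOn (logSqKernel x) (Ioi 0) := by
  refine (integrable_inv_one_add_sq.integrableOn.const_mul ((x - 1) ^ 2 / x)).mono'
    (measurable_logSqKernel x).aestronglyMeasurable ?_
  filter_upwards [self_mem_ae_restrict measurableSet_Ioi] with t (ht : 0 < t)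
  rw [norm_of_nonneg (logSqKernel_nonneg hx ht)]
  exact logSqKernel_le hx ht

theorem integrableOn_logSqKernelDeriv {x : ℝ} (hx : 0 < x) :
    IntegrableOn (logSqKernelDeriv x) (Ioi 0) := by
  refine (integrable_inv_one_add_sq.integrableOn.const_mul (1 + (x ^ 2)⁻¹)).mono'
    (measurable_logSqKernelDeriv x).aestronglyMeasurable ?_
  filter_upwards [self_mem_ae_restrict measurableSet_Ioi] with t (ht : 0 < t)
  exact abs_logSqKernelDeriv_le hx ht.le

theorem hasDerivAt_logSqKernel {x t : ℝ} (hx : 0 < x) (ht : 0 < t) :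
    HasDerivAt (logSqKernel · t) (logSqKernelDeriv x t) x := by
  have hnum : HasDerivAt (fun x => (1 + x * t) * (x + t)) (t * (x + t) + (1 + x * t)) x := by
    simpa using
      (((hasDerivAt_id x).mul_const t).const_add 1).fun_mul ((hasDerivAt_id x).add_const t)
  have hden : HasDerivAt (fun x => x * (1 + t) ^ 2) ((1 + t) ^ 2) x := by
    simpa using (hasDerivAt_id x).mul_const ((1 + t) ^ 2)
  refine (((hnum.fun_div hden (by positivity)).log (by positivity)).div_const t).congr_deriv ?_
  rw [logSqKernelDeriv]
  field_simp
  ring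

theorem tendsto_log_one_add_mul_div_add {x : ℝ} (hx : 0 < x) :
    Tendsto (fun t => log ((1 + x * t) / (x + t))) atTop (𝓝 (log x)) := by
  have h : Tendsto (fun t : ℝ => (t⁻¹ + x) / (x * t⁻¹ + 1)) atTop (𝓝 ((0 + x) / (x * 0 + 1))) :=
    (tendsto_inv_atTop_zero.add_const x).div
      ((tendsto_inv_atTop_zero.const_mul x).add_const 1) (by simp)
  rw [zero_add, mul_zero, zero_add, div_one] at h
  refine ((continuousAt_log hx.ne').tendsto.comp h).congr' ?_
  filter_upwards [eventually_gt_atTop 0] with t ht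
  rw [Function.comp_apply]
  congr 1
  field_simp

theorem integral_logSqKernelDeriv {x : ℝ} (hx : 0 < x) :
    ∫ t in Ioi 0, logSqKernelDeriv x t = 2 * log x / x := by
  have hderiv : ∀ t ∈ Ici (0 : ℝ),
      HasDerivAt (fun t => log ((1 + x * t) / (x + t)) / x) (logSqKernelDeriv x t) t := by
    intro t (ht : 0 ≤ t)
    have hnum : HasDerivAt (fun t => 1 + x * t) x t := by
      simpa using ((hasDerivAt_id t).const_mul x).const_add 1
    refine (((hnum.fun_div ((hasDerivAt_id' t).const_add x) (by positivity)).log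
      (by positivity)).div_const x).congr_deriv ?_
    rw [logSqKernelDeriv]
    field_simp
    ring
  rw [integral_Ioi_of_hasDerivAt_of_tendsto' hderiv (integrableOn_logSqKernelDeriv hx)
    ((tendsto_log_one_add_mul_div_add hx).div_const x)]
  simp only [mul_zero, add_zero, one_div, log_inv]
  ring

theorem hasDerivAt_integral_logSqKernel {x₀ : ℝ} (hx₀ : 0 < x₀) :
    HasDerivAt (fun x => ∫ t in Ioi 0, logSqKernel x t) (2 * log x₀ / x₀) x₀ := by
  have hball : ∀ x ∈ ball x₀ (x₀ / 2), x₀ / 2 < x := fun x hx => by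
    rw [mem_ball, dist_comm, Real.dist_eq] at hx
    linarith [(abs_lt.1 hx).2]
  rw [← integral_logSqKernelDeriv hx₀]
  refine (hasDerivAt_integral_of_dominated_loc_of_deriv_le (ball_mem_nhds x₀ (half_pos hx₀))
    (.of_forall fun x => (measurable_logSqKernel x).aestronglyMeasurable)
    (integrableOn_logSqKernel hx₀) (measurable_logSqKernelDeriv x₀).aestronglyMeasurable
    (bound := fun t => (1 + ((x₀ / 2) ^ 2)⁻¹) * (1 + t ^ 2)⁻¹) ?_
    (integrable_inv_one_add_sq.integrableOn.const_mul _) ?_).2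
  · filter_upwards [self_mem_ae_restrict measurableSet_Ioi] with t (ht : 0 < t) x hx
    have hx' := hball x hx
    refine (abs_logSqKernelDeriv_le (by linarith) ht.le).trans ?_
    gcongr
  · filter_upwards [self_mem_ae_restrict measurableSet_Ioi] with t (ht : 0 < t) x hx
    exact hasDerivAt_logSqKernel (by linarith [hball x hx]) ht

theorem integral_logSqKernel {x : ℝ} (hx : 0 < x) :
    ∫ t in Ioi 0, logSqKernel x t = log x ^ 2 := by
  have hderiv : ∀ y ∈ Ioi (0 : ℝ), HasDerivAt (fun y => log y ^ 2) (2 * log y / y) y :=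
    fun y (hy : 0 < y) => by
      simpa [div_eq_mul_inv, mul_comm, mul_left_comm] using
        ((hasDerivAt_log hy.ne').fun_pow 2)
  refine isOpen_Ioi.eqOn_of_deriv_eq isPreconnected_Ioi
    (fun y hy => (hasDerivAt_integral_logSqKernel hy).differentiableAt.differentiableWithinAt)
    (fun y hy => (hderiv y hy).differentiableAt.differentiableWithinAt)
    (fun y hy => (hasDerivAt_integral_logSqKernel hy).deriv.trans (hderiv y hy).deriv.symm)
    (one_pos : (0 : ℝ) < 1) ?_ hx
  have : ∀ t, logSqKernel 1 t = 0 := fun t => by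
    by_cases h : 1 + t = 0 <;> simp [logSqKernel, ← sq, h]
  simp [this]

theorem sum_logSqKernel_eq {ι : Type*} (s : Finset ι) {x : ι → ℝ} (hx : ∀ i ∈ s, 0 < x i)
    {t : ℝ} (ht : 0 < t) :
    ∑ i ∈ s, logSqKernel (x i) t =
      log ((∏ i ∈ s, (1 + x i * t)) * (∏ i ∈ s, (x i + t)) /
        ((∏ i ∈ s, x i) * ((1 + t) ^ 2) ^ s.card)) / t := by
  have hpos : ∀ i ∈ s, 0 < (1 + x i * t) * (x i + t) / (x i * (1 + t) ^ 2) := fun i hi => by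
    have := hx i hi
    positivity
  rw [← Finset.prod_const, ← Finset.prod_mul_distrib, ← Finset.prod_mul_distrib,
    ← Finset.prod_div_distrib, log_prod fun i hi => (hpos i hi).ne', Finset.sum_div]
  rfl

theorem sum_logSqKernel_le {ι : Type*} (s : Finset ι) {a y : ι → ℝ}
    (ha : ∀ i ∈ s, 0 < a i) (hy : ∀ i ∈ s, 0 < y i) {t : ℝ} (ht : 0 < t)
    (h_one_add : ∏ i ∈ s, (1 + a i * t) ≤ ∏ i ∈ s, (1 + y i * t))
    (h_add : ∏ i ∈ s, (a i + t) ≤ ∏ i ∈ s, (y i + t))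
    (h_prod : ∏ i ∈ s, y i = ∏ i ∈ s, a i) :
    ∑ i ∈ s, logSqKernel (a i) t ≤ ∑ i ∈ s, logSqKernel (y i) t := by
  have hpos : ∀ i ∈ s, 0 < 1 + a i * t ∧ 0 < a i + t := fun i hi => by
    have := ha i hi
    constructor <;> positivity
  have h_one_add_pos := Finset.prod_pos fun i hi => (hpos i hi).1
  have h_add_pos := Finset.prod_pos fun i hi => (hpos i hi).2
  have ha_pos := Finset.prod_pos ha
  rw [sum_logSqKernel_eq s ha ht, sum_logSqKernel_eq s hy ht, h_prod]
  refine div_le_div_of_nonneg_right (log_le_log (by positivity) ?_) ht.le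
  exact div_le_div_of_nonneg_right (mul_le_mul h_one_add h_add h_add_pos.le
    (h_one_add_pos.trans_le h_one_add).le) (by positivity)

theorem sum_sq_log_le_of_prod_le {ι : Type*} (s : Finset ι) {a y : ι → ℝ}
    (ha : ∀ i ∈ s, 0 < a i) (hy : ∀ i ∈ s, 0 < y i)
    (h_one_add : ∀ t > 0, ∏ i ∈ s, (1 + a i * t) ≤ ∏ i ∈ s, (1 + y i * t))
    (h_add : ∀ t > 0, ∏ i ∈ s, (a i + t) ≤ ∏ i ∈ s, (y i + t))
    (h_prod : ∏ i ∈ s, y i = ∏ i ∈ s, a i) :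
    ∑ i ∈ s, log (a i) ^ 2 ≤ ∑ i ∈ s, log (y i) ^ 2 := by
  calc ∑ i ∈ s, log (a i) ^ 2 = ∫ t in Ioi 0, ∑ i ∈ s, logSqKernel (a i) t := by
        rw [integral_finsetSum s fun i hi => integrableOn_logSqKernel (ha i hi)]
        exact Finset.sum_congr rfl fun i hi => (integral_logSqKernel (ha i hi)).symm
    _ ≤ ∫ t in Ioi 0, ∑ i ∈ s, logSqKernel (y i) t :=
        setIntegral_mono_on (integrable_finsetSum s fun i hi => integrableOn_logSqKernel (ha i hi))
          (integrable_finsetSum s fun i hi => integrableOn_logSqKernel (hy i hi))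
          measurableSet_Ioi fun t (ht : 0 < t) =>
            sum_logSqKernel_le s ha hy ht (h_one_add t ht) (h_add t ht) h_prod
    _ = ∑ i ∈ s, log (y i) ^ 2 := by
        rw [integral_finsetSum s fun i hi => integrableOn_logSqKernel (hy i hi)]
        exact Finset.sum_congr rfl fun i hi => integral_logSqKernel (hy i hi)

theorem stmt_0 (y1 y2 y3 a1 a2 a3 : ℝ)
    (hy1 : 0 < y1) (hy2 : 0 < y2) (hy3 : 0 < y3)
    (ha1 : 0 < a1) (ha2 : 0 < a2) (ha3 : 0 < a3)
    (hprod : y1 * y2 * y3 = a1 * a2 * a3)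
    (hsum : y1 + y2 + y3 ≥ a1 + a2 + a3)
    (hsum2 : y1 * y2 + y2 * y3 + y1 * y3 ≥ a1 * a2 + a2 * a3 + a1 * a3) :
    (Real.log y1)^2 + (Real.log y2)^2 + (Real.log y3)^2 ≥
    (Real.log a1)^2 + (Real.log a2)^2 + (Real.log a3)^2 := by
  have key := sum_sq_log_le_of_prod_le Finset.univ (a := ![a1, a2, a3]) (y := ![y1, y2, y3])
    (by simp [Fin.forall_fin_succ, ha1, ha2, ha3]) (by simp [Fin.forall_fin_succ, hy1, hy2, hy3])
    (fun t (ht : 0 < t) => by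
      simp only [Fin.prod_univ_three, Matrix.cons_val]
      linarith [mul_le_mul_of_nonneg_left hsum ht.le, mul_le_mul_of_nonneg_left hsum2 (sq_nonneg t),
        congrArg (t ^ 3 * ·) hprod])
    (fun t (ht : 0 < t) => by
      simp only [Fin.prod_univ_three, Matrix.cons_val]
      linarith [mul_le_mul_of_nonneg_left hsum2 ht.le, mul_le_mul_of_nonneg_left hsum (sq_nonneg t),
        hprod])
    (by simpa [Fin.prod_univ_three] using hprod)
  simpa [Fin.sum_univ_three] using key
end

section
/- Let c1, c2, c3, z1, z2, z3 be real numbers such that e^{z1}+e^{z2}+e^{z3} ≥ e^{c1}+e^{c2}+e^{c3}, e^{-z1}+e^{-z2}+e^{-z3} ≥ e^{-c1}+e^{-c2}+e^{-c3}, and z1+z2+z3 = c1+c2+c3. Then z1^2+z2^2+z3^2 ≥ c1^2+c2^2+c3^2. -/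
/-!
For real `z` and `t > 0` put `k(s, t) = (e^s - 1) / ((t + e^s)(t + 1))`, the `t`-derivative of
`log (t + 1) - log (t + e^s)`, so that `∫_0^∞ k(s, t) dt = s`. Integrating in `s` from `0` to `z`
and swapping the integrals (Fubini) gives
`z² / 2 = ∫_0^∞ (log (t + e^z) - log (t + 1) - z / (t + 1)) / t dt`.
Hence, when `∑ zᵢ = ∑ cᵢ`, the difference `(∑ zᵢ² - ∑ cᵢ²) / 2` is the integral of
`(log ∏ (t + e^{zᵢ}) - log ∏ (t + e^{cᵢ})) / t`, which is nonnegative as soon as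
`∏ (t + e^{cᵢ}) ≤ ∏ (t + e^{zᵢ})` for `t > 0`. For three variables the coefficients of these cubics
in `t` are the elementary symmetric functions of the `e^{zᵢ}`, and the hypotheses compare them:
`e₁` directly, `e₃` through the equal sums, and `e₂ = e₃ · ∑ e^{-zᵢ}`.
-/

open MeasureTheory Real Set Filter Topology Interval intervalIntegral

namespace SumSqLog

noncomputable def kernel (s t : ℝ) : ℝ := (exp s - 1) / ((t + exp s) * (t + 1))

noncomputable def sqKernel (z t : ℝ) : ℝ := (log (t + exp z) - log (t + 1) - z / (t + 1)) / t

lemma hasDerivAt_log_sub_log (s : ℝ) {t : ℝ} (ht : 0 ≤ t) :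
    HasDerivAt (fun u => log (u + 1) - log (u + exp s)) (kernel s t) t := by
  have h1 : t + 1 ≠ 0 := by positivity
  have h2 : t + exp s ≠ 0 := by positivity
  have := (((hasDerivAt_id t).add_const 1).log h1).sub
    (((hasDerivAt_id t).add_const (exp s)).log h2)
  refine this.congr_deriv ?_
  simp only [kernel, id]
  field_simp
  ring

lemma tendsto_log_sub_log (s : ℝ) :
    Tendsto (fun u => log (u + 1) - log (u + exp s)) atTop (𝓝 0) := by
  simpa using (tendsto_log_comp_add_sub_log 1).sub (tendsto_log_comp_add_sub_log (exp s))

lemma abs_kernel_le (s : ℝ) {t : ℝ} (ht : 0 ≤ t) :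
    |kernel s t| ≤ (exp |s| - 1) / (t + 1) ^ 2 := by
  have hs := exp_pos s
  have hden : 0 < (t + exp s) * (t + 1) := by positivity
  rw [kernel, abs_div, abs_of_pos hden, div_le_div_iff₀ hden (by positivity)]
  rcases le_total 0 s with h | h
  · have : 1 ≤ exp s := one_le_exp h
    rw [abs_of_nonneg h, abs_of_nonneg (show 0 ≤ exp s - 1 by linarith)]
    nlinarith [mul_nonneg (sub_nonneg.2 this) (sub_nonneg.2 this)]
  · have : exp s ≤ 1 := exp_le_one_iff.2 h
    have hinv : exp |s| * exp s = 1 := by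
      rw [abs_of_nonpos h, ← exp_add, neg_add_cancel, exp_zero]
    rw [abs_of_nonpos (show exp s - 1 ≤ 0 by linarith)]
    have key : (exp |s| - 1) * ((t + exp s) * (t + 1)) - -(exp s - 1) * (t + 1) ^ 2
        = exp |s| * (1 - exp s) ^ 2 * (t * (t + 1)) := by
      linear_combination (t + 1) * (1 + 2 * t - exp s * t) * hinv
    have : 0 ≤ exp |s| * (1 - exp s) ^ 2 * (t * (t + 1)) := by positivity
    linarith

lemma integrableOn_inv_add_one_sq : IntegrableOn (fun t : ℝ => ((t + 1) ^ 2)⁻¹) (Ioi 0) := by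
  refine integrable_inv_one_add_sq.integrableOn.mono' (by fun_prop) ?_
  filter_upwards [ae_restrict_mem measurableSet_Ioi] with t ht
  rw [norm_inv, Real.norm_of_nonneg (by positivity)]
  gcongr
  nlinarith [mem_Ioi.1 ht]

lemma integrableOn_kernel (s : ℝ) : IntegrableOn (kernel s) (Ioi 0) := by
  refine (integrableOn_inv_add_one_sq.const_mul (exp |s| - 1)).mono'
    (Measurable.aestronglyMeasurable (by unfold kernel; fun_prop)) ?_
  filter_upwards [ae_restrict_mem measurableSet_Ioi] with t ht
  simpa [div_eq_mul_inv] using abs_kernel_le s ht.le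

lemma integral_kernel (s : ℝ) : ∫ t in Ioi 0, kernel s t = s := by
  rw [integral_Ioi_of_hasDerivAt_of_tendsto
    (hasDerivAt_log_sub_log s le_rfl).continuousAt.continuousWithinAt
    (fun t ht => hasDerivAt_log_sub_log s ht.le) (integrableOn_kernel s) (tendsto_log_sub_log s)]
  simp

lemma integrable_kernel_prod (z : ℝ) :
    Integrable (Function.uncurry fun t s => kernel s t)
      ((volume.restrict (Ioi 0)).prod (volume.restrict (Ι 0 z))) := by
  have hbound : Integrable (fun p : ℝ × ℝ => (exp |z| - 1) * ((p.1 + 1) ^ 2)⁻¹ * 1)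
      ((volume.restrict (Ioi 0)).prod (volume.restrict (Ι 0 z))) :=
    (integrableOn_inv_add_one_sq.const_mul _).mul_prod (integrableOn_const measure_Ioc_lt_top.ne)
  refine hbound.mono' (Measurable.aestronglyMeasurable (by unfold kernel; fun_prop)) ?_
  rw [Measure.prod_restrict]
  filter_upwards [ae_restrict_mem (measurableSet_Ioi.prod measurableSet_uIoc)] with p ⟨ht, hs⟩
  have hs' : |p.2| ≤ |z| := by
    rcases le_total 0 z with h | h
    · rw [uIoc_of_le h] at hs
      exact abs_le_abs_of_nonneg hs.1.le hs.2
    · rw [uIoc_of_ge h] at hs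
      exact abs_le_abs_of_nonpos hs.2 hs.1.le
  calc ‖kernel p.2 p.1‖ ≤ (exp |p.2| - 1) / (p.1 + 1) ^ 2 := abs_kernel_le _ ht.le
    _ ≤ (exp |z| - 1) * ((p.1 + 1) ^ 2)⁻¹ * 1 := by
      rw [mul_one, div_eq_mul_inv]
      gcongr

lemma sqKernel_eq_integral_kernel (z : ℝ) {t : ℝ} (ht : 0 < t) :
    sqKernel z t = ∫ s in 0..z, kernel s t := by
  have hderiv : ∀ s,
      HasDerivAt (fun u => (log (t + exp u) - u / (t + 1)) / t) (kernel s t) s := by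
    intro s
    have := ((((hasDerivAt_exp s).const_add t).log (by positivity)).sub
      ((hasDerivAt_id s).div_const (t + 1))).div_const t
    refine this.congr_deriv ?_
    simp only [kernel]
    field_simp
    ring
  have hcont : Continuous fun s => kernel s t :=
    Continuous.div (by fun_prop) (by fun_prop) fun s => by positivity
  rw [intervalIntegral.integral_eq_sub_of_hasDerivAt (fun s _ => hderiv s)
    (hcont.intervalIntegrable _ _)]
  simp only [sqKernel, exp_zero]
  ring

lemma sqKernel_eqOn (z : ℝ) : EqOn (sqKernel z)
    (fun t => (if 0 ≤ z then 1 else -1 : ℝ) • ∫ s in Ι 0 z, kernel s t) (Ioi 0) := fun t ht => by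
  rw [sqKernel_eq_integral_kernel z ht, intervalIntegral_eq_integral_uIoc]

lemma integrableOn_sqKernel (z : ℝ) : IntegrableOn (sqKernel z) (Ioi 0) :=
  IntegrableOn.congr_fun ((integrable_kernel_prod z).integral_prod_left.smul
    (if 0 ≤ z then 1 else -1 : ℝ))
    (sqKernel_eqOn z).symm measurableSet_Ioi

lemma integral_sqKernel (z : ℝ) : ∫ t in Ioi 0, sqKernel z t = z ^ 2 / 2 := by
  rw [setIntegral_congr_fun measurableSet_Ioi (sqKernel_eqOn z), MeasureTheory.integral_smul,
    integral_integral_swap (integrable_kernel_prod z)]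
  simp_rw [integral_kernel]
  rw [← intervalIntegral_eq_integral_uIoc, integral_id]
  ring

lemma sum_sqKernel_le {ι : Type*} (s : Finset ι) {c z : ι → ℝ}
    (hsum : ∑ i ∈ s, z i = ∑ i ∈ s, c i) {t : ℝ} (ht : 0 < t)
    (hprod : ∏ i ∈ s, (t + exp (c i)) ≤ ∏ i ∈ s, (t + exp (z i))) :
    ∑ i ∈ s, sqKernel (c i) t ≤ ∑ i ∈ s, sqKernel (z i) t := by
  have hsum_eq : ∀ x : ι → ℝ, ∑ i ∈ s, sqKernel (x i) t
      = (log (∏ i ∈ s, (t + exp (x i))) - s.card * log (t + 1)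
          - (∑ i ∈ s, x i) / (t + 1)) / t := by
    intro x
    rw [log_prod fun i _ => by positivity]
    simp only [sqKernel, ← Finset.sum_div, Finset.sum_sub_distrib, Finset.sum_const, nsmul_eq_mul]
  rw [hsum_eq, hsum_eq, hsum]
  gcongr

theorem sum_sq_le_sum_sq_of_prod_add_exp_le {ι : Type*} (s : Finset ι) {c z : ι → ℝ}
    (hsum : ∑ i ∈ s, z i = ∑ i ∈ s, c i)
    (hprod : ∀ t > 0, ∏ i ∈ s, (t + exp (c i)) ≤ ∏ i ∈ s, (t + exp (z i))) :
    ∑ i ∈ s, c i ^ 2 ≤ ∑ i ∈ s, z i ^ 2 := by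
  have hint : ∀ x : ι → ℝ, ∀ i ∈ s, IntegrableOn (sqKernel (x i)) (Ioi 0) :=
    fun x i _ => integrableOn_sqKernel (x i)
  have hval : ∀ x : ι → ℝ,
      ∫ t in Ioi 0, ∑ i ∈ s, sqKernel (x i) t = (∑ i ∈ s, x i ^ 2) / 2 := by
    intro x
    rw [integral_finsetSum s (hint x), Finset.sum_div]
    exact Finset.sum_congr rfl fun i _ => integral_sqKernel (x i)
  have := setIntegral_mono_on (integrable_finsetSum s (hint c)) (integrable_finsetSum s (hint z))
    measurableSet_Ioi fun t ht => sum_sqKernel_le s hsum ht (hprod t ht)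
  rw [hval, hval] at this
  linarith

end SumSqLog

lemma prod_add_le_prod_add_of_sum_le_of_sum_inv_le {x₁ x₂ x₃ y₁ y₂ y₃ : ℝ}
    (hx₁ : 0 < x₁) (hx₂ : 0 < x₂) (hx₃ : 0 < x₃) (hy₁ : 0 < y₁) (hy₂ : 0 < y₂) (hy₃ : 0 < y₃)
    (hsum : y₁ + y₂ + y₃ ≤ x₁ + x₂ + x₃) (hinv : y₁⁻¹ + y₂⁻¹ + y₃⁻¹ ≤ x₁⁻¹ + x₂⁻¹ + x₃⁻¹)
    (hprod : x₁ * x₂ * x₃ = y₁ * y₂ * y₃) {t : ℝ} (ht : 0 ≤ t) :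
    (t + y₁) * (t + y₂) * (t + y₃) ≤ (t + x₁) * (t + x₂) * (t + x₃) := by
  have he₂ : y₂ * y₃ + y₁ * y₃ + y₁ * y₂ ≤ x₂ * x₃ + x₁ * x₃ + x₁ * x₂ :=
    calc y₂ * y₃ + y₁ * y₃ + y₁ * y₂ = y₁ * y₂ * y₃ * (y₁⁻¹ + y₂⁻¹ + y₃⁻¹) := by
          field_simp
      _ ≤ x₁ * x₂ * x₃ * (x₁⁻¹ + x₂⁻¹ + x₃⁻¹) := by
          rw [hprod]; gcongr
      _ = x₂ * x₃ + x₁ * x₃ + x₁ * x₂ := by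
          field_simp
  nlinarith [mul_nonneg (sq_nonneg t) (sub_nonneg.2 hsum), mul_nonneg ht (sub_nonneg.2 he₂)]

theorem stmt_1 (c1 c2 c3 z1 z2 z3 : ℝ)
    (h1 : Real.exp z1 + Real.exp z2 + Real.exp z3 ≥ Real.exp c1 + Real.exp c2 + Real.exp c3)
    (h2 : Real.exp (-z1) + Real.exp (-z2) + Real.exp (-z3) ≥
      Real.exp (-c1) + Real.exp (-c2) + Real.exp (-c3))
    (h3 : z1 + z2 + z3 = c1 + c2 + c3) :
    z1^2 + z2^2 + z3^2 ≥ c1^2 + c2^2 + c3^2 := by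
  have hprod : exp z1 * exp z2 * exp z3 = exp c1 * exp c2 * exp c3 := by
    simp only [← exp_add, h3]
  simp only [exp_neg] at h2
  have := SumSqLog.sum_sq_le_sum_sq_of_prod_add_exp_le Finset.univ (c := ![c1, c2, c3])
    (z := ![z1, z2, z3]) (by simpa [Fin.sum_univ_three] using h3) fun t ht => by
      simpa [Fin.prod_univ_three] using prod_add_le_prod_add_of_sum_le_of_sum_inv_le
        (exp_pos z1) (exp_pos z2) (exp_pos z3) (exp_pos c1) (exp_pos c2) (exp_pos c3)
        h1 h2 hprod ht.le
  simpa [Fin.sum_univ_three] using this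
end

section
/- Let a ≥ b ≥ c and x ≥ y ≥ z be real numbers with a+b+c = x+y+z = 0 and a^2+b^2+c^2 = x^2+y^2+z^2. Then e^a + e^b + e^c ≤ e^x + e^y + e^z holds if and only if a ≤ x. -/
/-!
A zero-sum triple `a ≥ b ≥ c` with `a² + b² + c² = S` is determined by its largest entry:
`b, c = (-a ± √(2S - 3a²)) / 2`, and `a` ranges over `[√(S/6), √(2S/3)]`. Along this arc
`b' = (c - a)/(b - c)` and `c' = (a - b)/(b - c)`, so the derivative of `eᵃ + eᵇ + eᶜ` is
`(eᵃ(b - c) + eᵇ(c - a) + eᶜ(a - b)) / (b - c)`, which is positive by strict convexity of `exp`.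
Hence `eᵃ + eᵇ + eᶜ` is strictly increasing in `a`.
-/

open Real Set

lemma StrictConvexOn.cyclic_sum_pos {s : Set ℝ} {f : ℝ → ℝ} (hf : StrictConvexOn ℝ s f)
    {a b c : ℝ} (ha : a ∈ s) (hc : c ∈ s) (hcb : c < b) (hba : b < a) :
    0 < f a * (b - c) + f b * (c - a) + f c * (a - b) := by
  have hslope := hf.slope_strict_mono_adjacent hc ha hcb hba
  rw [div_lt_div_iff₀ (sub_pos.2 hcb) (sub_pos.2 hba)] at hslope
  linarith

noncomputable def midEntry (S a : ℝ) : ℝ := (-a + √(2 * S - 3 * a ^ 2)) / 2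

noncomputable def lowEntry (S a : ℝ) : ℝ := (-a - √(2 * S - 3 * a ^ 2)) / 2

noncomputable def expSumOfLargest (S a : ℝ) : ℝ := exp a + exp (midEntry S a) + exp (lowEntry S a)

lemma midEntry_sub_lowEntry (S a : ℝ) : midEntry S a - lowEntry S a = √(2 * S - 3 * a ^ 2) := by
  unfold midEntry lowEntry; ring

lemma midEntry_lowEntry_of_sorted {a b c : ℝ} (hab : b ≤ a) (hbc : c ≤ b) (hs : a + b + c = 0) :
    midEntry (a ^ 2 + b ^ 2 + c ^ 2) a = b ∧ lowEntry (a ^ 2 + b ^ 2 + c ^ 2) a = c := by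
  have hsq : 2 * (a ^ 2 + b ^ 2 + c ^ 2) - 3 * a ^ 2 = (b - c) ^ 2 := by
    obtain rfl : a = -(b + c) := by linarith
    ring
  unfold midEntry lowEntry
  rw [hsq, sqrt_sq (sub_nonneg.2 hbc)]
  constructor <;> linarith

lemma largest_mem_Icc_of_sorted {a b c : ℝ} (hab : b ≤ a) (hbc : c ≤ b) (hs : a + b + c = 0) :
    a ∈ Icc (√((a ^ 2 + b ^ 2 + c ^ 2) / 6)) (√(2 * (a ^ 2 + b ^ 2 + c ^ 2) / 3)) := by
  have hc : c = -(a + b) := by linarith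
  subst hc
  have ha : 0 ≤ a := by linarith
  constructor
  · rw [sqrt_le_left ha]
    nlinarith [mul_nonneg (sub_nonneg.2 hab) (by linarith : (0 : ℝ) ≤ 2 * a + b)]
  · rw [le_sqrt ha (by positivity)]
    nlinarith [sq_nonneg (a + 2 * b)]

lemma hasDerivAt_sqrt_two_mul_sub {S a : ℝ} (h : 0 < 2 * S - 3 * a ^ 2) :
    HasDerivAt (fun t ↦ √(2 * S - 3 * t ^ 2)) (-(3 * a) / √(2 * S - 3 * a ^ 2)) a := by
  have hq : HasDerivAt (fun t : ℝ ↦ 2 * S - 3 * t ^ 2) (-(3 * (2 * a))) a := by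
    simpa using ((hasDerivAt_pow 2 a).const_mul (3 : ℝ)).const_sub (2 * S)
  convert hq.sqrt h.ne' using 1
  field_simp

lemma hasDerivAt_midEntry {S a : ℝ} (h : 0 < 2 * S - 3 * a ^ 2) :
    HasDerivAt (midEntry S) ((lowEntry S a - a) / (midEntry S a - lowEntry S a)) a := by
  have hd := (sqrt_pos.2 h).ne'
  refine ((hasDerivAt_id' a).neg.add (hasDerivAt_sqrt_two_mul_sub h)).div_const 2 |>.congr_deriv ?_
  rw [midEntry_sub_lowEntry]
  unfold lowEntry
  field_simp
  ring

lemma hasDerivAt_lowEntry {S a : ℝ} (h : 0 < 2 * S - 3 * a ^ 2) :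
    HasDerivAt (lowEntry S) ((a - midEntry S a) / (midEntry S a - lowEntry S a)) a := by
  have hd := (sqrt_pos.2 h).ne'
  refine ((hasDerivAt_id' a).neg.sub (hasDerivAt_sqrt_two_mul_sub h)).div_const 2 |>.congr_deriv ?_
  rw [midEntry_sub_lowEntry]
  unfold midEntry
  field_simp
  ring

lemma hasDerivAt_expSumOfLargest {S a : ℝ} (h : 0 < 2 * S - 3 * a ^ 2) :
    HasDerivAt (expSumOfLargest S)
      ((exp a * (midEntry S a - lowEntry S a) + exp (midEntry S a) * (lowEntry S a - a)
        + exp (lowEntry S a) * (a - midEntry S a)) / (midEntry S a - lowEntry S a)) a := by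
  have hd : midEntry S a - lowEntry S a ≠ 0 := by
    rw [midEntry_sub_lowEntry]; exact (sqrt_pos.2 h).ne'
  refine (((hasDerivAt_exp a).add (hasDerivAt_midEntry h).exp).add
    (hasDerivAt_lowEntry h).exp).congr_deriv ?_
  field_simp

lemma sorted_of_mem_Ioo {S a : ℝ} (ha : a ∈ Ioo (√(S / 6)) (√(2 * S / 3))) :
    0 < 2 * S - 3 * a ^ 2 ∧ lowEntry S a < midEntry S a ∧ midEntry S a < a := by
  obtain ⟨hlo, hhi⟩ := ha
  have ha0 : 0 < a := (sqrt_nonneg _).trans_lt hlo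
  have hd : 0 < 2 * S - 3 * a ^ 2 := by
    have := (lt_sqrt ha0.le).1 hhi
    linarith
  have hd3 : √(2 * S - 3 * a ^ 2) < 3 * a := by
    rw [sqrt_lt' (by positivity)]
    have := (sqrt_lt' ha0).1 hlo
    linarith
  refine ⟨hd, ?_, ?_⟩
  · rw [← sub_pos, midEntry_sub_lowEntry]; exact sqrt_pos.2 hd
  · unfold midEntry; linarith

lemma strictMonoOn_expSumOfLargest (S : ℝ) :
    StrictMonoOn (expSumOfLargest S) (Icc (√(S / 6)) (√(2 * S / 3))) := by
  refine strictMonoOn_of_deriv_pos (convex_Icc _ _) ?_ fun a ha ↦ ?_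
  · unfold expSumOfLargest midEntry lowEntry
    fun_prop
  rw [interior_Icc] at ha
  obtain ⟨hd, hlow, hmid⟩ := sorted_of_mem_Ioo ha
  rw [(hasDerivAt_expSumOfLargest hd).deriv]
  exact div_pos (strictConvexOn_exp.cyclic_sum_pos trivial trivial hlow hmid) (sub_pos.2 hlow)

lemma expSumOfLargest_of_sorted {a b c : ℝ} (hab : b ≤ a) (hbc : c ≤ b) (hs : a + b + c = 0) :
    expSumOfLargest (a ^ 2 + b ^ 2 + c ^ 2) a = exp a + exp b + exp c := by
  obtain ⟨hb, hc⟩ := midEntry_lowEntry_of_sorted hab hbc hs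
  rw [expSumOfLargest, hb, hc]

theorem stmt_2 (a b c x y z : ℝ)
    (hab : a ≥ b) (hbc : b ≥ c) (hxy : x ≥ y) (hyz : y ≥ z)
    (hs1 : a + b + c = 0) (hs2 : x + y + z = 0)
    (hsq : a^2 + b^2 + c^2 = x^2 + y^2 + z^2) :
    Real.exp a + Real.exp b + Real.exp c ≤ Real.exp x + Real.exp y + Real.exp z ↔ a ≤ x := by
  have hx := largest_mem_Icc_of_sorted hxy hyz hs2
  rw [← expSumOfLargest_of_sorted hab hbc hs1, ← expSumOfLargest_of_sorted hxy hyz hs2]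
  rw [← hsq] at hx ⊢
  exact (strictMonoOn_expSumOfLargest _).le_iff_le (largest_mem_Icc_of_sorted hab hbc hs1) hx
end

section
/- Let a ≥ b ≥ c and x ≥ y ≥ z be real numbers with a+b+c = x+y+z = 0 and a^2+b^2+c^2 = x^2+y^2+z^2. Then a ≤ x holds if and only if c ≤ z. -/
/-!
Eliminating the middle entry, `a² + b² + c² = 2 (a² + a c + c²)` for `a + b + c = 0`, and
`f (a + u) (c - v) - f a c = u (2a + c) - v (a + 2c) + (u² - u v + v²)` for `f a c = a² + a c + c²`.
For a sorted triple `2a + c = a - b ≥ 0` and `a + 2c = c - b ≤ 0`, so moving the largest entry up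
and the smallest entry down strictly increases the sum of squares. Applied to each of the two
triples, this gives the two directions of the equivalence.
-/

lemma sq_sub_mul_add_sq_pos {u v : ℝ} (hu : 0 ≤ u) (hv : 0 ≤ v) (h : 0 < u ∨ 0 < v) :
    0 < u ^ 2 - u * v + v ^ 2 := by
  have huv := mul_nonneg hu hv
  rcases h with h | h <;> nlinarith [sq_nonneg (u - v)]

lemma sum_sq_lt_of_spread {a b c x y z : ℝ} (hab : b ≤ a) (hbc : c ≤ b)
    (hs : a + b + c = 0) (hs' : x + y + z = 0) (hx : a ≤ x) (hz : z ≤ c)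
    (hne : a < x ∨ z < c) :
    a ^ 2 + b ^ 2 + c ^ 2 < x ^ 2 + y ^ 2 + z ^ 2 := by
  obtain rfl : b = -a - c := by linarith
  obtain rfl : y = -x - z := by linarith
  have expand : x ^ 2 + (-x - z) ^ 2 + z ^ 2 - (a ^ 2 + (-a - c) ^ 2 + c ^ 2) =
      2 * ((x - a) * (2 * a + c) + (c - z) * -(a + 2 * c) +
        ((x - a) ^ 2 - (x - a) * (c - z) + (c - z) ^ 2)) := by ring
  have hquad := sq_sub_mul_add_sq_pos (sub_nonneg.2 hx) (sub_nonneg.2 hz)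
    (hne.imp sub_pos.2 sub_pos.2)
  have hlin₁ := mul_nonneg (sub_nonneg.2 hx) (by linarith : (0 : ℝ) ≤ 2 * a + c)
  have hlin₂ := mul_nonneg (sub_nonneg.2 hz) (by linarith : (0 : ℝ) ≤ -(a + 2 * c))
  linarith

theorem stmt_3 (a b c x y z : ℝ)
    (hab : a ≥ b) (hbc : b ≥ c) (hxy : x ≥ y) (hyz : y ≥ z)
    (hs1 : a + b + c = 0) (hs2 : x + y + z = 0)
    (hsq : a^2 + b^2 + c^2 = x^2 + y^2 + z^2) :
    a ≤ x ↔ c ≤ z := by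
  constructor
  · intro hax
    by_contra! hzc
    exact (sum_sq_lt_of_spread hab hbc hs1 hs2 hax hzc.le (Or.inr hzc)).ne hsq
  · intro hcz
    by_contra! hxa
    exact (sum_sq_lt_of_spread hxy hyz hs2 hs1 hxa.le hcz (Or.inl hxa)).ne' hsq
end

section
/- Let a ≥ b ≥ c and x ≥ y ≥ z be real numbers with a+b+c = x+y+z = 0 and a^2+b^2+c^2 = x^2+y^2+z^2. Then at least one of the inequalities e^a+e^b+e^c ≤ e^x+e^y+e^z or e^{-a}+e^{-b}+e^{-c} ≤ e^{-x}+e^{-y}+e^{-z} holds; moreover both hold simultaneously if and only if a = x, b = y, and c = z. -/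
/-!
Both triples are the roots of cubics `t³ - σ t² + e t - π` with the same `σ` and `e`, so if
`abc < xyz` the two cubics differ by a positive constant, and this forces the interlacing
`c < z ≤ y < b ≤ a < x`. Let `Q` be the quadratic interpolating `f` at `z < b < x`. As `Q` takes
equal sums on the two triples, `Σ f(x) - Σ f(a) = g y - g a - g c` with `g = f - Q`, and when
`f''' > 0` the interpolation error `g t` has the sign of `(t - z)(t - b)(t - x)`, making each of the
three terms nonnegative and the last one positive. Applied to `exp` on the triples and on their
negatives, this gives both inequalities when the products differ, while equal products force
equal triples.
-/

open Set

section Interpolation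

variable {f f' f'' f''' : ℝ → ℝ}

lemma exists_hasDerivAt_eq_zero_of_forall (hf : ∀ u, HasDerivAt f (f' u) u) {p q : ℝ}
    (hpq : p < q) (h : f p = f q) : ∃ ξ ∈ Ioo p q, f' ξ = 0 :=
  exists_hasDerivAt_eq_zero hpq (fun u _ => (hf u).continuousAt.continuousWithinAt) h
    fun u _ => hf u

lemma exists_third_deriv_eq_of_eq_cubic (hf : ∀ u, HasDerivAt f (f' u) u)
    (hf' : ∀ u, HasDerivAt f' (f'' u) u) (hf'' : ∀ u, HasDerivAt f'' (f''' u) u)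
    {α β γ δ p q r s : ℝ} (hpq : p < q) (hqr : q < r) (hrs : r < s)
    (hp : f p = α * p ^ 3 + β * p ^ 2 + γ * p + δ)
    (hq : f q = α * q ^ 3 + β * q ^ 2 + γ * q + δ)
    (hr : f r = α * r ^ 3 + β * r ^ 2 + γ * r + δ)
    (hs : f s = α * s ^ 3 + β * s ^ 2 + γ * s + δ) :
    ∃ ξ, f''' ξ = 6 * α := by
  have hh : ∀ u, HasDerivAt (fun v => f v - (α * v ^ 3 + β * v ^ 2 + γ * v + δ))
      (f' u - (3 * α * u ^ 2 + 2 * β * u + γ)) u := fun u => by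
    refine (hf u).fun_sub ?_
    convert ((((hasDerivAt_pow 3 u).const_mul α).fun_add
      ((hasDerivAt_pow 2 u).const_mul β)).fun_add ((hasDerivAt_id' u).const_mul γ)).add_const δ
      using 1
    push_cast; ring
  have hh' : ∀ u, HasDerivAt (fun v => f' v - (3 * α * v ^ 2 + 2 * β * v + γ))
      (f'' u - (6 * α * u + 2 * β)) u := fun u => by
    refine (hf' u).fun_sub ?_
    convert (((hasDerivAt_pow 2 u).const_mul (3 * α)).fun_add
      ((hasDerivAt_id' u).const_mul (2 * β))).add_const γ using 1
    push_cast; ring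
  have hh'' : ∀ u, HasDerivAt (fun v => f'' v - (6 * α * v + 2 * β)) (f''' u - 6 * α) u :=
    fun u => (hf'' u).fun_sub
      (by simpa using ((hasDerivAt_id' u).const_mul (6 * α)).add_const (2 * β))
  obtain ⟨p₁, hp₁, e₁⟩ := exists_hasDerivAt_eq_zero_of_forall hh hpq (by simp [hp, hq])
  obtain ⟨q₁, hq₁, e₂⟩ := exists_hasDerivAt_eq_zero_of_forall hh hqr (by simp [hq, hr])
  obtain ⟨r₁, hr₁, e₃⟩ := exists_hasDerivAt_eq_zero_of_forall hh hrs (by simp [hr, hs])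
  obtain ⟨p₂, hp₂, e₄⟩ := exists_hasDerivAt_eq_zero_of_forall hh' (hp₁.2.trans hq₁.1)
    (e₁.trans e₂.symm)
  obtain ⟨q₂, hq₂, e₅⟩ := exists_hasDerivAt_eq_zero_of_forall hh' (hq₁.2.trans hr₁.1)
    (e₂.trans e₃.symm)
  obtain ⟨ξ, -, e₆⟩ := exists_hasDerivAt_eq_zero_of_forall hh'' (hp₂.2.trans hq₂.1)
    (e₄.trans e₅.symm)
  exact ⟨ξ, by linarith⟩

lemma exists_quadratic_interpolant {p q r : ℝ} (hpq : p ≠ q) (hpr : p ≠ r) (hqr : q ≠ r)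
    (u v w : ℝ) : ∃ A B C : ℝ, u = A * p ^ 2 + B * p + C ∧ v = A * q ^ 2 + B * q + C ∧
      w = A * r ^ 2 + B * r + C := by
  have hpq' : p - q ≠ 0 := sub_ne_zero.2 hpq
  have hpr' : p - r ≠ 0 := sub_ne_zero.2 hpr
  have hqr' : q - r ≠ 0 := sub_ne_zero.2 hqr
  set A := ((u - v) / (p - q) - (v - w) / (q - r)) / (p - r)
  set B := (u - v) / (p - q) - A * (p + q)
  refine ⟨A, B, u - A * p ^ 2 - B * p, by ring, ?_, ?_⟩
  · simp only [B]; field_simp; ring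
  · simp only [A, B]; field_simp; ring

lemma interpolation_error_mul_nodal_pos (hf : ∀ u, HasDerivAt f (f' u) u)
    (hf' : ∀ u, HasDerivAt f' (f'' u) u) (hf'' : ∀ u, HasDerivAt f'' (f''' u) u)
    (hf''' : ∀ u, 0 < f''' u) {A B C p q r t : ℝ} (hpq : p < q) (hqr : q < r)
    (hp : f p = A * p ^ 2 + B * p + C) (hq : f q = A * q ^ 2 + B * q + C)
    (hr : f r = A * r ^ 2 + B * r + C) (htp : t ≠ p) (htq : t ≠ q) (htr : t ≠ r) :
    0 < (f t - (A * t ^ 2 + B * t + C)) * ((t - p) * (t - q) * (t - r)) := by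
  set ω := (t - p) * (t - q) * (t - r)
  have hω : ω ≠ 0 := by simp [ω, sub_ne_zero, htp, htq, htr]
  set D := (f t - (A * t ^ 2 + B * t + C)) / ω
  -- `f` agrees with the cubic `A u² + B u + C + D ω(u)` at the four points `p, q, r, t`.
  have cubic : ∀ u, f u = A * u ^ 2 + B * u + C + D * ((u - p) * (u - q) * (u - r)) →
      f u = D * u ^ 3 + (A - D * (p + q + r)) * u ^ 2 + (B + D * (p * q + p * r + q * r)) * u
        + (C - D * p * q * r) := fun u h => h.trans (by ring)
  have hp' := cubic p (by rw [hp]; ring)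
  have hq' := cubic q (by rw [hq]; ring)
  have hr' := cubic r (by rw [hr]; ring)
  have ht' := cubic t (by rw [div_mul_cancel₀ _ hω]; ring)
  obtain ⟨ξ, hξ⟩ : ∃ ξ, f''' ξ = 6 * D := by
    rcases htp.lt_or_gt with htp | htp
    · exact exists_third_deriv_eq_of_eq_cubic hf hf' hf'' htp hpq hqr ht' hp' hq' hr'
    rcases htq.lt_or_gt with htq | htq
    · exact exists_third_deriv_eq_of_eq_cubic hf hf' hf'' htp htq hqr hp' ht' hq' hr'
    rcases htr.lt_or_gt with htr | htr
    · exact exists_third_deriv_eq_of_eq_cubic hf hf' hf'' hpq htq htr hp' hq' ht' hr'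
    · exact exists_third_deriv_eq_of_eq_cubic hf hf' hf'' hpq hqr htr hp' hq' hr' ht'
  have hD : 0 < D := by linarith [hf''' ξ]
  have : f t - (A * t ^ 2 + B * t + C) = D * ω := (div_mul_cancel₀ _ hω).symm
  rw [this, mul_assoc]
  exact mul_pos hD (mul_self_pos.2 hω)

end Interpolation

section Triples

variable {a b c x y z : ℝ}

lemma cubic_sub_cubic (hs : a + b + c = x + y + z)
    (hsq : a ^ 2 + b ^ 2 + c ^ 2 = x ^ 2 + y ^ 2 + z ^ 2) (t : ℝ) :
    (t - a) * (t - b) * (t - c) - (t - x) * (t - y) * (t - z) = x * y * z - a * b * c := by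
  linear_combination (-t ^ 2 + t * (a + b + c + x + y + z) / 2) * hs - t / 2 * hsq

lemma interlace_of_prod_lt (hab : a ≥ b) (hbc : b ≥ c) (hxy : x ≥ y) (hyz : y ≥ z)
    (hs : a + b + c = x + y + z) (hsq : a ^ 2 + b ^ 2 + c ^ 2 = x ^ 2 + y ^ 2 + z ^ 2)
    (h : a * b * c < x * y * z) : c < z ∧ y < b ∧ a < x := by
  have key := cubic_sub_cubic hs hsq
  have hax : a < x := by
    by_contra! hxa
    nlinarith [key a, mul_nonneg (mul_nonneg (sub_nonneg.2 hxa) (sub_nonneg.2 (hxy.trans hxa)))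
      (sub_nonneg.2 ((hyz.trans hxy).trans hxa))]
  have hcz : c < z := by
    by_contra! hzc
    nlinarith [key z, mul_nonneg (mul_nonneg (sub_nonneg.2 ((hzc.trans hbc).trans hab))
      (sub_nonneg.2 (hzc.trans hbc))) (sub_nonneg.2 hzc)]
  refine ⟨hcz, ?_, hax⟩
  by_contra! hby
  rcases lt_or_ge y a with hya | hay
  · nlinarith [key y, mul_nonneg (mul_nonneg (sub_nonneg.2 hya.le) (sub_nonneg.2 hby))
      (sub_nonneg.2 (hcz.le.trans hyz))]
  · linarith

lemma le_of_prod_le (hab : a ≥ b) (hbc : b ≥ c) (hxy : x ≥ y) (hyz : y ≥ z)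
    (hs : a + b + c = x + y + z) (hsq : a ^ 2 + b ^ 2 + c ^ 2 = x ^ 2 + y ^ 2 + z ^ 2)
    (h : a * b * c ≤ x * y * z) : a ≤ x ∧ c ≤ z := by
  have key := cubic_sub_cubic hs hsq
  constructor
  · by_contra! hxa
    nlinarith [key a, mul_pos (mul_pos (sub_pos.2 hxa) (sub_pos.2 (hxy.trans_lt hxa)))
      (sub_pos.2 ((hyz.trans hxy).trans_lt hxa))]
  · by_contra! hzc
    nlinarith [key z, mul_pos (mul_pos (sub_pos.2 ((hzc.trans_le hbc).trans_le hab))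
      (sub_pos.2 (hzc.trans_le hbc))) (sub_pos.2 hzc)]

lemma eq_of_prod_eq (hab : a ≥ b) (hbc : b ≥ c) (hxy : x ≥ y) (hyz : y ≥ z)
    (hs : a + b + c = x + y + z) (hsq : a ^ 2 + b ^ 2 + c ^ 2 = x ^ 2 + y ^ 2 + z ^ 2)
    (h : a * b * c = x * y * z) : a = x ∧ b = y ∧ c = z := by
  obtain ⟨hax, hcz⟩ := le_of_prod_le hab hbc hxy hyz hs hsq h.le
  obtain ⟨hxa, hzc⟩ := le_of_prod_le hxy hyz hab hbc hs.symm hsq.symm h.ge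
  exact ⟨le_antisymm hax hxa, by linarith, le_antisymm hcz hzc⟩

theorem sum_lt_sum_of_prod_lt {f f' f'' f''' : ℝ → ℝ} (hf : ∀ u, HasDerivAt f (f' u) u)
    (hf' : ∀ u, HasDerivAt f' (f'' u) u) (hf'' : ∀ u, HasDerivAt f'' (f''' u) u)
    (hf''' : ∀ u, 0 < f''' u) (hab : a ≥ b) (hbc : b ≥ c) (hxy : x ≥ y) (hyz : y ≥ z)
    (hs : a + b + c = x + y + z) (hsq : a ^ 2 + b ^ 2 + c ^ 2 = x ^ 2 + y ^ 2 + z ^ 2)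
    (h : a * b * c < x * y * z) : f a + f b + f c < f x + f y + f z := by
  obtain ⟨hcz, hyb, hax⟩ := interlace_of_prod_lt hab hbc hxy hyz hs hsq h
  have hzb : z < b := hyz.trans_lt hyb
  have hbx : b < x := hab.trans_lt hax
  obtain ⟨A, B, C, hz, hb, hx⟩ :=
    exists_quadratic_interpolant hzb.ne (hzb.trans hbx).ne hbx.ne (f z) (f b) (f x)
  have sign := fun t =>
    interpolation_error_mul_nodal_pos hf hf' hf'' hf''' (t := t) hzb hbx hz hb hx
  have hgy : 0 ≤ f y - (A * y ^ 2 + B * y + C) := by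
    rcases hyz.eq_or_lt with rfl | hzy
    · linarith
    refine ((pos_iff_pos_of_mul_pos (sign y hzy.ne' hyb.ne (hyb.trans hbx).ne)).2 ?_).le
    exact mul_pos_of_neg_of_neg (mul_neg_of_pos_of_neg (sub_pos.2 hzy) (sub_neg.2 hyb))
      (sub_neg.2 (hyb.trans hbx))
  have hga : f a - (A * a ^ 2 + B * a + C) ≤ 0 := by
    rcases hab.eq_or_lt with rfl | hba
    · linarith
    refine ((neg_iff_neg_of_mul_pos (sign a (hzb.trans hba).ne' hba.ne' hax.ne)).2 ?_).le
    exact mul_neg_of_pos_of_neg (mul_pos (sub_pos.2 (hzb.trans hba)) (sub_pos.2 hba))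
      (sub_neg.2 hax)
  have hgc : f c - (A * c ^ 2 + B * c + C) < 0 := by
    refine (neg_iff_neg_of_mul_pos (sign c hcz.ne (hcz.trans hzb).ne
      (hcz.trans (hzb.trans hbx)).ne)).2 ?_
    exact mul_neg_of_pos_of_neg (mul_pos_of_neg_of_neg (sub_neg.2 hcz)
      (sub_neg.2 (hcz.trans hzb))) (sub_neg.2 (hcz.trans (hzb.trans hbx)))
  have hQ : (A * a ^ 2 + B * a + C) + (A * b ^ 2 + B * b + C) + (A * c ^ 2 + B * c + C)
      = (A * x ^ 2 + B * x + C) + (A * y ^ 2 + B * y + C) + (A * z ^ 2 + B * z + C) := by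
    linear_combination A * hsq + B * hs
  linarith

lemma sum_exp_lt_of_prod_lt (hab : a ≥ b) (hbc : b ≥ c) (hxy : x ≥ y) (hyz : y ≥ z)
    (hs : a + b + c = x + y + z) (hsq : a ^ 2 + b ^ 2 + c ^ 2 = x ^ 2 + y ^ 2 + z ^ 2)
    (h : a * b * c < x * y * z) :
    Real.exp a + Real.exp b + Real.exp c < Real.exp x + Real.exp y + Real.exp z ∧
      Real.exp (-x) + Real.exp (-y) + Real.exp (-z) <
        Real.exp (-a) + Real.exp (-b) + Real.exp (-c) := by
  have hexp := fun u => Real.hasDerivAt_exp u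
  refine ⟨sum_lt_sum_of_prod_lt hexp hexp hexp Real.exp_pos hab hbc hxy hyz hs hsq h, ?_⟩
  have := sum_lt_sum_of_prod_lt hexp hexp hexp Real.exp_pos (neg_le_neg hyz) (neg_le_neg hxy)
    (neg_le_neg hbc) (neg_le_neg hab) (by linarith) (by linear_combination hsq.symm) (by linarith)
  linarith

end Triples

theorem stmt_5 (a b c x y z : ℝ)
    (hab : a ≥ b) (hbc : b ≥ c) (hxy : x ≥ y) (hyz : y ≥ z)
    (hs1 : a + b + c = 0) (hs2 : x + y + z = 0)
    (hsq : a^2 + b^2 + c^2 = x^2 + y^2 + z^2) :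
    (Real.exp a + Real.exp b + Real.exp c ≤ Real.exp x + Real.exp y + Real.exp z ∨
     Real.exp (-a) + Real.exp (-b) + Real.exp (-c) ≤ Real.exp (-x) + Real.exp (-y) + Real.exp (-z)) ∧
    ((Real.exp a + Real.exp b + Real.exp c ≤ Real.exp x + Real.exp y + Real.exp z ∧
      Real.exp (-a) + Real.exp (-b) + Real.exp (-c) ≤ Real.exp (-x) + Real.exp (-y) + Real.exp (-z))
      ↔ (a = x ∧ b = y ∧ c = z)) := by
  have hs : a + b + c = x + y + z := hs1.trans hs2.symm
  rcases lt_trichotomy (a * b * c) (x * y * z) with h | h | h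
  · obtain ⟨h₁, h₂⟩ := sum_exp_lt_of_prod_lt hab hbc hxy hyz hs hsq h
    refine ⟨.inl h₁.le, fun h' => absurd h'.2 (not_le.2 h₂), ?_⟩
    rintro ⟨rfl, rfl, rfl⟩
    exact (lt_irrefl _ h).elim
  · obtain ⟨rfl, rfl, rfl⟩ := eq_of_prod_eq hab hbc hxy hyz hs hsq h
    simp
  · obtain ⟨h₁, h₂⟩ := sum_exp_lt_of_prod_lt hxy hyz hab hbc hs.symm hsq.symm h
    refine ⟨.inr h₂.le, fun h' => absurd h'.1 (not_le.2 h₁), ?_⟩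
    rintro ⟨rfl, rfl, rfl⟩
    exact (lt_irrefl _ h).elim
end

section
/- Let a ≥ b ≥ c and x ≥ y ≥ z be real numbers with a+b+c = x+y+z = 0, a^2+b^2+c^2 = x^2+y^2+z^2, and e^a+e^b+e^c = e^x+e^y+e^z. Then a = x, b = y, and c = z. -/
/-!
Sorted triples with equal sums and equal sums of squares are the roots of two monic cubics that
differ by the constant `abc - xyz`; when it is positive the roots interlace as
`z < c ≤ b < y ≤ x < a`. Let `q` be the quadratic interpolating `f` at `z, b, x`. If `f''' > 0`,
Rolle's theorem forces `f - q` to have the sign of `(t - z)(t - b)(t - x)` off the nodes, and since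
the quadratic parts cancel, `Σ f(a) - Σ f(x) = (f - q)(a) + (f - q)(c) - (f - q)(y) > 0`.
For `f = exp`, equal sums of exponentials therefore force `abc = xyz`, and then the two cubics,
hence their sorted roots, coincide.
-/

open Finset

theorem exists_finset_deriv_eq_zero_of_finset_eq_zero {g g' : ℝ → ℝ}
    (hg : ∀ x, HasDerivAt g (g' x) x) {s : Finset ℝ} (hs : ∀ x ∈ s, g x = 0) :
    ∃ t : Finset ℝ, (∀ x ∈ t, g' x = 0) ∧ #s ≤ #t + 1 := by
  have rolle : ∀ x y, x < y → g x = 0 → g y = 0 → ∃ z ∈ Set.Ioo x y, g' z = 0 :=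
    fun x y hxy hx hy => exists_hasDerivAt_eq_zero hxy
      (fun z _ => (hg z).continuousAt.continuousWithinAt) (hx.trans hy.symm) fun z _ => hg z
  classical
  choose! r hr hr' using rolle
  refine ⟨((s ×ˢ s).filter fun p => p.1 < p.2).image fun p => r p.1 p.2, ?_, ?_⟩
  · simp only [mem_image, mem_filter, mem_product, Prod.exists]
    rintro _ ⟨x, y, ⟨⟨hx, hy⟩, hxy⟩, rfl⟩
    exact hr' x y hxy (hs x hx) (hs y hy)
  · refine card_le_of_interleaved fun x hx y hy hxy _ =>
      ⟨r x y, ?_, hr x y hxy (hs x hx) (hs y hy)⟩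
    exact mem_image.mpr ⟨(x, y), mem_filter.mpr ⟨mem_product.mpr ⟨hx, hy⟩, hxy⟩, rfl⟩

theorem exists_third_deriv_eq_zero {φ φ₁ φ₂ φ₃ : ℝ → ℝ} (h₁ : ∀ x, HasDerivAt φ (φ₁ x) x)
    (h₂ : ∀ x, HasDerivAt φ₁ (φ₂ x) x) (h₃ : ∀ x, HasDerivAt φ₂ (φ₃ x) x) {s : Finset ℝ}
    (hs : 4 ≤ #s) (hφ : ∀ x ∈ s, φ x = 0) : ∃ ξ, φ₃ ξ = 0 := by
  obtain ⟨s₁, hs₁, hc₁⟩ := exists_finset_deriv_eq_zero_of_finset_eq_zero h₁ hφ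
  obtain ⟨s₂, hs₂, hc₂⟩ := exists_finset_deriv_eq_zero_of_finset_eq_zero h₂ hs₁
  obtain ⟨s₃, hs₃, hc₃⟩ := exists_finset_deriv_eq_zero_of_finset_eq_zero h₃ hs₂
  obtain ⟨ξ, hξ⟩ : s₃.Nonempty := card_pos.mp (by omega)
  exact ⟨ξ, hs₃ ξ hξ⟩

theorem exists_quadratic_interpolation (g : ℝ → ℝ) {u v w : ℝ} (huv : u < v) (hvw : v < w) :
    ∃ α β γ : ℝ, g u = α * u ^ 2 + β * u + γ ∧ g v = α * v ^ 2 + β * v + γ ∧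
      g w = α * w ^ 2 + β * w + γ := by
  have h₁ : v - u ≠ 0 := by linarith
  have h₂ : w - v ≠ 0 := by linarith
  have h₃ : w - u ≠ 0 := by linarith
  set d₁ := (g v - g u) / (v - u)
  set d₂ := ((g w - g v) / (w - v) - d₁) / (w - u)
  refine ⟨d₂, d₁ - (u + v) * d₂, g u - u * d₁ + u * v * d₂, by ring, ?_, ?_⟩
  · simp only [d₁]; field_simp; ring
  · simp only [d₂, d₁]; field_simp; ring

section Triples

variable {a b c x y z : ℝ}

theorem cubic_eq_cubic_add_of_sum_eq (hsum : a + b + c = x + y + z)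
    (hsq : a ^ 2 + b ^ 2 + c ^ 2 = x ^ 2 + y ^ 2 + z ^ 2) (t : ℝ) :
    (t - x) * (t - y) * (t - z) = (t - a) * (t - b) * (t - c) + (a * b * c - x * y * z) := by
  linear_combination (t ^ 2 - t * (a + b + c + x + y + z) / 2) * hsum + t / 2 * hsq

variable (hab : b ≤ a) (hbc : c ≤ b) (hxy : y ≤ x) (hyz : z ≤ y)
  (hsum : a + b + c = x + y + z) (hsq : a ^ 2 + b ^ 2 + c ^ 2 = x ^ 2 + y ^ 2 + z ^ 2)
include hab hbc hxy hyz hsum hsq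

theorem le_and_le_of_mul_le (h : x * y * z ≤ a * b * c) : x ≤ a ∧ z ≤ c := by
  have hP := cubic_eq_cubic_add_of_sum_eq hsum hsq
  constructor
  · by_contra! hax
    have := hP x
    linarith [mul_pos (mul_pos (sub_pos.mpr hax) (by linarith : 0 < x - b))
      (by linarith : 0 < x - c)]
  · by_contra! hcz
    have := hP c
    linarith [mul_pos (mul_pos (by linarith : 0 < x - c) (by linarith : 0 < y - c))
      (sub_pos.mpr hcz)]

theorem lt_and_lt_of_mul_lt (h : x * y * z < a * b * c) : x < a ∧ z < c := by
  have hP := cubic_eq_cubic_add_of_sum_eq hsum hsq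
  constructor
  · by_contra! hax
    have := hP x
    linarith [mul_nonneg (mul_nonneg (sub_nonneg.mpr hax) (by linarith : 0 ≤ x - b))
      (by linarith : 0 ≤ x - c)]
  · by_contra! hcz
    have := hP c
    linarith [mul_nonneg (mul_nonneg (by linarith : 0 ≤ x - c) (by linarith : 0 ≤ y - c))
      (sub_nonneg.mpr hcz)]

end Triples

section ThirdDeriv

variable {f f₁ f₂ f₃ : ℝ → ℝ} (h₁ : ∀ x, HasDerivAt f (f₁ x) x)
  (h₂ : ∀ x, HasDerivAt f₁ (f₂ x) x) (h₃ : ∀ x, HasDerivAt f₂ (f₃ x) x)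
include h₁ h₂ h₃

theorem exists_third_deriv_eq_of_eqOn_cubic {s : Finset ℝ} (hs : 4 ≤ #s) {k A B C : ℝ}
    (hf : ∀ x ∈ s, f x = k * x ^ 3 + A * x ^ 2 + B * x + C) : ∃ ξ, f₃ ξ = 6 * k := by
  have d₁ : ∀ x, HasDerivAt (fun x => f x - (k * x ^ 3 + A * x ^ 2 + B * x + C))
      (f₁ x - (3 * k * x ^ 2 + 2 * A * x + B)) x := fun x => by
    refine (h₁ x).sub ?_
    convert ((((hasDerivAt_pow 3 x).const_mul k).fun_add
      ((hasDerivAt_pow 2 x).const_mul A)).fun_add ((hasDerivAt_id' x).const_mul B)).add_const C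
      using 1
    push_cast; ring
  have d₂ : ∀ x, HasDerivAt (fun x => f₁ x - (3 * k * x ^ 2 + 2 * A * x + B))
      (f₂ x - (6 * k * x + 2 * A)) x := fun x => by
    refine (h₂ x).sub ?_
    convert (((hasDerivAt_pow 2 x).const_mul (3 * k)).fun_add
      ((hasDerivAt_id' x).const_mul (2 * A))).add_const B using 1
    push_cast; ring
  have d₃ : ∀ x, HasDerivAt (fun x => f₂ x - (6 * k * x + 2 * A)) (f₃ x - 6 * k) x := fun x => by
    refine (h₃ x).sub ?_
    convert ((hasDerivAt_id' x).const_mul (6 * k)).add_const (2 * A) using 1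
    ring
  obtain ⟨ξ, hξ⟩ := exists_third_deriv_eq_zero d₁ d₂ d₃ hs fun x hx => sub_eq_zero.mpr (hf x hx)
  exact ⟨ξ, sub_eq_zero.mp hξ⟩

theorem mul_interpolation_error_pos (hpos : ∀ x, 0 < f₃ x) {u v w t α β γ : ℝ}
    (huv : u ≠ v) (huw : u ≠ w) (hvw : v ≠ w) (hu : f u = α * u ^ 2 + β * u + γ)
    (hv : f v = α * v ^ 2 + β * v + γ) (hw : f w = α * w ^ 2 + β * w + γ)
    (htu : t ≠ u) (htv : t ≠ v) (htw : t ≠ w) :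
    0 < (f t - (α * t ^ 2 + β * t + γ)) * ((t - u) * (t - v) * (t - w)) := by
  set ω := (t - u) * (t - v) * (t - w)
  have hω : ω ≠ 0 := by simp [ω, sub_ne_zero, htu, htv, htw]
  set K := (f t - (α * t ^ 2 + β * t + γ)) / ω
  have hs : 4 ≤ #({u, v, w, t} : Finset ℝ) := by
    rw [card_insert_of_notMem (by simp [huv, huw, htu.symm]),
      card_insert_of_notMem (by simp [hvw, htv.symm]), card_pair htw.symm]
  -- `f - q - K ω` vanishes at `u, v, w, t`, so `f''' - 6 K` has a zero.
  obtain ⟨ξ, hξ⟩ := exists_third_deriv_eq_of_eqOn_cubic h₁ h₂ h₃ hs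
    (k := K) (A := α - K * (u + v + w)) (B := β + K * (u * v + v * w + w * u))
    (C := γ - K * (u * v * w)) (by
      simp only [mem_insert, mem_singleton]
      rintro x (rfl | rfl | rfl | rfl)
      · linear_combination hu
      · linear_combination hv
      · linear_combination hw
      · linear_combination (div_mul_cancel₀ (f x - (α * x ^ 2 + β * x + γ)) hω).symm)
  have hK : 0 < K := by linarith [hpos ξ]
  calc 0 < K * ω ^ 2 := by positivity
    _ = _ := by simp only [K]; field_simp

theorem sum_lt_sum_of_mul_lt (hpos : ∀ x, 0 < f₃ x) {a b c x y z : ℝ} (hab : b ≤ a)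
    (hbc : c ≤ b) (hxy : y ≤ x) (hyz : z ≤ y) (hsum : a + b + c = x + y + z)
    (hsq : a ^ 2 + b ^ 2 + c ^ 2 = x ^ 2 + y ^ 2 + z ^ 2) (hprod : x * y * z < a * b * c) :
    f x + f y + f z < f a + f b + f c := by
  obtain ⟨hxa, hzc⟩ := lt_and_lt_of_mul_lt hab hbc hxy hyz hsum hsq hprod
  have hby : b < y := by linarith
  obtain ⟨α, β, γ, hz, hb, hx⟩ :=
    exists_quadratic_interpolation f (hzc.trans_le hbc) (hby.trans_le hxy)
  have herr := fun t => mul_interpolation_error_pos (t := t) h₁ h₂ h₃ hpos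
    (by linarith) (by linarith) (by linarith) hz hb hx
  have ha : 0 < f a - (α * a ^ 2 + β * a + γ) := by
    refine (pos_iff_pos_of_mul_pos (herr a (by linarith) (by linarith) (by linarith))).mpr ?_
    exact mul_pos (mul_pos (by linarith) (by linarith)) (by linarith)
  have hc : 0 ≤ f c - (α * c ^ 2 + β * c + γ) := by
    rcases hbc.lt_or_eq with hcb | hcb
    · refine ((pos_iff_pos_of_mul_pos
        (herr c (by linarith) (by linarith) (by linarith))).mpr ?_).le
      exact mul_pos_of_neg_of_neg (mul_neg_of_pos_of_neg (by linarith) (by linarith))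
        (by linarith)
    · rw [hcb]; linarith
  have hy : f y - (α * y ^ 2 + β * y + γ) ≤ 0 := by
    rcases hxy.lt_or_eq with hyx | hyx
    · refine ((neg_iff_neg_of_mul_pos
        (herr y (by linarith) (by linarith) (by linarith))).mpr ?_).le
      exact mul_neg_of_pos_of_neg (mul_pos (by linarith) (by linarith)) (by linarith)
    · rw [hyx]; linarith
  have hdiff : f a + f b + f c - (f x + f y + f z) = (f a - (α * a ^ 2 + β * a + γ))
      + (f c - (α * c ^ 2 + β * c + γ)) - (f y - (α * y ^ 2 + β * y + γ)) := by
    linear_combination hb - hx - hz + α * hsq + β * hsum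
  linarith

end ThirdDeriv

theorem stmt_6 (a b c x y z : ℝ)
    (hab : a ≥ b) (hbc : b ≥ c) (hxy : x ≥ y) (hyz : y ≥ z)
    (hs1 : a + b + c = 0) (hs2 : x + y + z = 0)
    (hsq : a^2 + b^2 + c^2 = x^2 + y^2 + z^2)
    (hexp : Real.exp a + Real.exp b + Real.exp c = Real.exp x + Real.exp y + Real.exp z) :
    a = x ∧ b = y ∧ c = z := by
  have hsum : a + b + c = x + y + z := hs1.trans hs2.symm
  have exp_lt := @sum_lt_sum_of_mul_lt _ _ _ _ Real.hasDerivAt_exp Real.hasDerivAt_exp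
    Real.hasDerivAt_exp Real.exp_pos
  have hprod : a * b * c = x * y * z := by
    by_contra hne
    rcases lt_or_gt_of_ne hne with h | h
    · exact (exp_lt hxy hyz hab hbc hsum.symm hsq.symm h).ne hexp
    · exact (exp_lt hab hbc hxy hyz hsum hsq h).ne' hexp
  obtain ⟨hxa, hzc⟩ := le_and_le_of_mul_le hab hbc hxy hyz hsum hsq hprod.ge
  obtain ⟨hax, hcz⟩ := le_and_le_of_mul_le hxy hyz hab hbc hsum.symm hsq.symm hprod.le
  exact ⟨le_antisymm hax hxa, by linarith, le_antisymm hcz hzc⟩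
end

section
/- For any real numbers x, y, z with x + y + z = 0, the inequality x*e^x + y*e^y + z*e^z ≥ 0 holds, with equality if and only if x = y = z = 0. -/
/-!
Summing `(a - b) * (f a - f b)` over the three pairs of `x, y, z` gives
`3 * (x f x + y f y + z f z) - (x + y + z) * (f x + f y + f z)`, the three-term case of
Chebyshev's sum inequality. For increasing `f` every summand is nonnegative, and for strictly
increasing `f` a summand vanishes only when its two points agree; with `x + y + z = 0` this gives
the inequality for `f = exp` and forces `x = y = z = 0` in the equality case.
-/

theorem sub_mul_sub_add_sub_mul_sub_add_sub_mul_sub {R : Type*} [CommRing R] (x y z u v w : R) :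
    (x - y) * (u - v) + (y - z) * (v - w) + (z - x) * (w - u) =
      3 * (x * u + y * v + z * w) - (x + y + z) * (u + v + w) := by
  ring

section Chebyshev

variable {R : Type*} [CommRing R] [LinearOrder R] [IsStrictOrderedRing R] {f : R → R}

theorem Monotone.sub_mul_sub_nonneg (hf : Monotone f) (a b : R) :
    0 ≤ (a - b) * (f a - f b) := by
  rcases le_total a b with h | h
  · exact mul_nonneg_of_nonpos_of_nonpos (sub_nonpos.2 h) (sub_nonpos.2 (hf h))
  · exact mul_nonneg (sub_nonneg.2 h) (sub_nonneg.2 (hf h))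

theorem Function.Injective.sub_mul_sub_eq_zero_iff (hf : Function.Injective f) (a b : R) :
    (a - b) * (f a - f b) = 0 ↔ a = b := by
  rw [mul_eq_zero, sub_eq_zero, sub_eq_zero, hf.eq_iff, or_self]

theorem Monotone.mul_add_mul_add_mul_nonneg (hf : Monotone f) {x y z : R}
    (hs : x + y + z = 0) : 0 ≤ x * f x + y * f y + z * f z := by
  have hsum := sub_mul_sub_add_sub_mul_sub_add_sub_mul_sub x y z (f x) (f y) (f z)
  rw [hs, zero_mul, sub_zero] at hsum
  have h3 : 0 ≤ 3 * (x * f x + y * f y + z * f z) := by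
    rw [← hsum]
    exact add_nonneg (add_nonneg (hf.sub_mul_sub_nonneg x y) (hf.sub_mul_sub_nonneg y z))
      (hf.sub_mul_sub_nonneg z x)
  exact nonneg_of_mul_nonneg_right h3 three_pos

theorem StrictMono.mul_add_mul_add_mul_eq_zero_iff (hf : StrictMono f) {x y z : R}
    (hs : x + y + z = 0) : x * f x + y * f y + z * f z = 0 ↔ x = 0 ∧ y = 0 ∧ z = 0 := by
  refine ⟨fun h ↦ ?_, by rintro ⟨rfl, rfl, rfl⟩; simp⟩
  have hsum := sub_mul_sub_add_sub_mul_sub_add_sub_mul_sub x y z (f x) (f y) (f z)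
  rw [hs, h, zero_mul, mul_zero, sub_zero] at hsum
  have hxy := hf.monotone.sub_mul_sub_nonneg x y
  have hyz := hf.monotone.sub_mul_sub_nonneg y z
  have hzx := hf.monotone.sub_mul_sub_nonneg z x
  have hx_eq_y : x = y := (hf.injective.sub_mul_sub_eq_zero_iff x y).1 (by linarith)
  have hy_eq_z : y = z := (hf.injective.sub_mul_sub_eq_zero_iff y z).1 (by linarith)
  subst hx_eq_y hy_eq_z
  have hx : x = 0 := by linarith
  exact ⟨hx, hx, hx⟩

end Chebyshev

theorem stmt_7 (x y z : ℝ) (hs : x + y + z = 0) :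
    x * Real.exp x + y * Real.exp y + z * Real.exp z ≥ 0 ∧
    (x * Real.exp x + y * Real.exp y + z * Real.exp z = 0 ↔ x = 0 ∧ y = 0 ∧ z = 0) :=
  ⟨Real.exp_monotone.mul_add_mul_add_mul_nonneg hs,
    Real.exp_strictMono.mul_add_mul_add_mul_eq_zero_iff hs⟩
end

section
/- For real r > 0 and φ ∈ [0, π/3], define h(r,φ) = e^{r cos φ} + e^{r cos(φ + 2π/3)} + e^{r cos(φ - 2π/3)}. Then for fixed φ ∈ [0, π/3], the function r ↦ h(r,φ) is strictly increasing on (0,∞). -/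
/-!
The three cosines `cos φ`, `cos (φ ± 2π/3)` sum to `0` and their squares sum to `3/2`, so
they are not all zero. For any such zero-sum family `c`, the derivative of `r ↦ ∑ exp (r cᵢ)` is
`∑ cᵢ exp (r cᵢ) = ∑ cᵢ (exp (r cᵢ) - 1)`, a sum of nonnegative terms which is positive for
`r > 0` as soon as some `cᵢ ≠ 0`.
-/

open Real Finset

lemma mul_exp_mul_sub_one_nonneg {r : ℝ} (hr : 0 ≤ r) (c : ℝ) :
    0 ≤ c * (exp (r * c) - 1) := by
  rcases le_total 0 c with hc | hc
  · exact mul_nonneg hc (sub_nonneg.mpr (one_le_exp (mul_nonneg hr hc)))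
  · exact mul_nonneg_of_nonpos_of_nonpos hc
      (sub_nonpos.mpr (exp_le_one_iff.mpr (mul_nonpos_of_nonneg_of_nonpos hr hc)))

lemma mul_exp_mul_sub_one_pos {r c : ℝ} (hr : 0 < r) (hc : c ≠ 0) :
    0 < c * (exp (r * c) - 1) := by
  rcases hc.lt_or_gt with hc | hc
  · exact mul_pos_of_neg_of_neg hc (sub_neg.mpr (exp_lt_one_iff.mpr (mul_neg_of_pos_of_neg hr hc)))
  · exact mul_pos hc (sub_pos.mpr (one_lt_exp_iff.mpr (mul_pos hr hc)))

theorem strictMonoOn_sum_exp_mul {ι : Type*} {s : Finset ι} {c : ι → ℝ}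
    (hsum : ∑ i ∈ s, c i = 0) (hne : ∃ i ∈ s, c i ≠ 0) :
    StrictMonoOn (fun r => ∑ i ∈ s, exp (r * c i)) (Set.Ici 0) := by
  refine strictMonoOn_of_deriv_pos (convex_Ici 0) (by fun_prop) fun r hr => ?_
  rw [interior_Ici, Set.mem_Ioi] at hr
  have hderiv :
      HasDerivAt (fun r => ∑ i ∈ s, exp (r * c i)) (∑ i ∈ s, exp (r * c i) * c i) r :=
    HasDerivAt.fun_sum fun i _ => (hasDerivAt_mul_const (c i)).exp
  have hshift : ∑ i ∈ s, exp (r * c i) * c i = ∑ i ∈ s, c i * (exp (r * c i) - 1) := by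
    simp only [mul_sub, mul_one, sum_sub_distrib, hsum, sub_zero, mul_comm]
  rw [hderiv.deriv, hshift]
  obtain ⟨j, hj, hcj⟩ := hne
  exact sum_pos' (fun i _ => mul_exp_mul_sub_one_nonneg hr.le (c i))
    ⟨j, hj, mul_exp_mul_sub_one_pos hr hcj⟩

lemma cos_two_pi_div_three : cos (2 * π / 3) = -(1 / 2) := by
  rw [show 2 * π / 3 = π - π / 3 by ring, cos_pi_sub, cos_pi_div_three]

lemma sin_two_pi_div_three : sin (2 * π / 3) = √3 / 2 := by
  rw [show 2 * π / 3 = π - π / 3 by ring, sin_pi_sub, sin_pi_div_three]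

lemma cos_add_cos_add_two_pi_div_three_add_cos_sub_two_pi_div_three (φ : ℝ) :
    cos φ + cos (φ + 2 * π / 3) + cos (φ - 2 * π / 3) = 0 := by
  rw [cos_add, cos_sub, cos_two_pi_div_three]
  ring

lemma cos_sq_add_cos_sq_add_two_pi_div_three_add_cos_sq_sub_two_pi_div_three (φ : ℝ) :
    cos φ ^ 2 + cos (φ + 2 * π / 3) ^ 2 + cos (φ - 2 * π / 3) ^ 2 = 3 / 2 := by
  rw [cos_add, cos_sub, cos_two_pi_div_three, sin_two_pi_div_three]
  have h3 : √3 ^ 2 = 3 := sq_sqrt (by norm_num)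
  linear_combination (3 / 2) * sin_sq_add_cos_sq φ + (sin φ ^ 2 / 2) * h3

theorem stmt_8_general (φ : ℝ) :
    StrictMonoOn (fun r : ℝ =>
      Real.exp (r * Real.cos φ) + Real.exp (r * Real.cos (φ + 2 * Real.pi / 3)) +
        Real.exp (r * Real.cos (φ - 2 * Real.pi / 3)))
      (Set.Ioi 0) := by
  let c : Fin 3 → ℝ := ![cos φ, cos (φ + 2 * π / 3), cos (φ - 2 * π / 3)]
  have hsum : ∑ i, c i = 0 := by
    simpa [c, Fin.sum_univ_three] using
      cos_add_cos_add_two_pi_div_three_add_cos_sub_two_pi_div_three φ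
  have hne : ∃ i ∈ univ, c i ≠ 0 := by
    by_contra! hzero
    have hsq := cos_sq_add_cos_sq_add_two_pi_div_three_add_cos_sq_sub_two_pi_div_three φ
    rw [show cos φ = 0 from hzero 0 (mem_univ _),
      show cos (φ + 2 * π / 3) = 0 from hzero 1 (mem_univ _),
      show cos (φ - 2 * π / 3) = 0 from hzero 2 (mem_univ _)] at hsq
    norm_num at hsq
  have hmono := (strictMonoOn_sum_exp_mul hsum hne).mono Set.Ioi_subset_Ici_self
  simpa [c, Fin.sum_univ_three] using hmono

theorem stmt_8 (φ : ℝ) (hφ : φ ∈ Set.Icc 0 (Real.pi / 3)) :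
    StrictMonoOn (fun r : ℝ =>
      Real.exp (r * Real.cos φ) + Real.exp (r * Real.cos (φ + 2 * Real.pi / 3)) +
        Real.exp (r * Real.cos (φ - 2 * Real.pi / 3)))
      (Set.Ioi 0) :=
  stmt_8_general φ
end

section
/- For real r > 0 and φ ∈ [0, π/3], define h(r,φ) = e^{r cos φ} + e^{r cos(φ + 2π/3)} + e^{r cos(φ - 2π/3)}. Then for fixed r > 0, the function φ ↦ h(r,φ) is monotone decreasing on [0, π/3]. -/
/-!
Write `θ₁ = φ`, `θ₂ = φ + 2π/3`, `θ₃ = φ - 2π/3`. The derivative of `h(r, ·)` is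
`-r ∑ sin θₖ e^{r cos θₖ}`. Since `∑ sin θₖ = 0` and `∑ sin θₖ cos θₖ = ½ ∑ sin 2θₖ = 0`, the weights
`sₖ = sin θₖ` annihilate both constants and the `xₖ = r cos θₖ`; on `[0, π/3]` the weights `s₁, s₂` are
nonnegative, so comparing `e^{xₖ}` with its tangent line at `x₃` gives `∑ sₖ e^{xₖ} ≥ 0`.
-/

open Real

lemma exp_mul_sub_add_one_le_exp (x y : ℝ) : exp y * (x - y + 1) ≤ exp x := by
  calc exp y * (x - y + 1) ≤ exp y * exp (x - y) :=
        mul_le_mul_of_nonneg_left (add_one_le_exp _) (exp_pos y).le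
    _ = exp x := by rw [← exp_add, add_sub_cancel]

lemma sum_mul_exp_nonneg {s₁ s₂ s₃ x₁ x₂ x₃ : ℝ} (hs₁ : 0 ≤ s₁) (hs₂ : 0 ≤ s₂)
    (hs : s₁ + s₂ + s₃ = 0) (hsx : s₁ * x₁ + s₂ * x₂ + s₃ * x₃ = 0) :
    0 ≤ s₁ * exp x₁ + s₂ * exp x₂ + s₃ * exp x₃ := by
  have h₁ := mul_le_mul_of_nonneg_left (exp_mul_sub_add_one_le_exp x₁ x₃) hs₁
  have h₂ := mul_le_mul_of_nonneg_left (exp_mul_sub_add_one_le_exp x₂ x₃) hs₂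
  have hs₃ : s₃ = -(s₁ + s₂) := by linarith
  subst hs₃
  linear_combination h₁ + h₂ - exp x₃ * hsx

lemma sin_add_sin_add_two_pi_div_three_add_sin_sub (φ : ℝ) :
    sin φ + sin (φ + 2 * π / 3) + sin (φ - 2 * π / 3) = 0 := by
  rw [sin_add, sin_sub, show 2 * π / 3 = π - π / 3 by ring, cos_pi_sub, sin_pi_sub,
    cos_pi_div_three]
  ring

lemma sin_mul_cos_add_sin_mul_cos_add_two_pi_div_three_add_sin_mul_cos_sub (φ : ℝ) :
    sin φ * cos φ + sin (φ + 2 * π / 3) * cos (φ + 2 * π / 3) +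
      sin (φ - 2 * π / 3) * cos (φ - 2 * π / 3) = 0 := by
  have h := sin_add_sin_add_two_pi_div_three_add_sin_sub (2 * φ)
  have h₂ : sin (2 * (φ + 2 * π / 3)) = sin (2 * φ - 2 * π / 3) := by
    rw [← sin_add_two_pi (2 * φ - 2 * π / 3)]; ring_nf
  have h₃ : sin (2 * (φ - 2 * π / 3)) = sin (2 * φ + 2 * π / 3) := by
    rw [← sin_sub_two_pi (2 * φ + 2 * π / 3)]; ring_nf
  rw [← h₂, ← h₃, sin_two_mul, sin_two_mul, sin_two_mul] at h
  linarith

theorem stmt_9 (r : ℝ) (hr : 0 < r) :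
    AntitoneOn (fun φ : ℝ =>
      Real.exp (r * Real.cos φ) + Real.exp (r * Real.cos (φ + 2 * Real.pi / 3)) +
        Real.exp (r * Real.cos (φ - 2 * Real.pi / 3)))
      (Set.Icc 0 (Real.pi / 3)) := by
  have hderiv (φ : ℝ) : HasDerivAt (fun φ : ℝ =>
      exp (r * cos φ) + exp (r * cos (φ + 2 * π / 3)) + exp (r * cos (φ - 2 * π / 3)))
      (-r * (sin φ * exp (r * cos φ) + sin (φ + 2 * π / 3) * exp (r * cos (φ + 2 * π / 3)) +
        sin (φ - 2 * π / 3) * exp (r * cos (φ - 2 * π / 3)))) φ :=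
    ((((hasDerivAt_cos φ).const_mul r).exp.add
      (((hasDerivAt_id φ).add_const _).cos.const_mul r).exp).add
      (((hasDerivAt_id φ).sub_const _).cos.const_mul r).exp).congr_deriv (by simp only [id]; ring)
  refine antitoneOn_of_hasDerivWithinAt_nonpos (convex_Icc _ _) (by fun_prop)
    (fun φ _ => (hderiv φ).hasDerivWithinAt) fun φ hφ => ?_
  rw [interior_Icc] at hφ
  have hsum := sum_mul_exp_nonneg
    (sin_nonneg_of_nonneg_of_le_pi hφ.1.le (by linarith [hφ.2, pi_pos]))
    (sin_nonneg_of_nonneg_of_le_pi (by linarith [hφ.1, pi_pos]) (by linarith [hφ.2]))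
    (sin_add_sin_add_two_pi_div_three_add_sin_sub φ)
    (x₁ := r * cos φ) (x₂ := r * cos (φ + 2 * π / 3)) (x₃ := r * cos (φ - 2 * π / 3))
    (by linear_combination r *
      sin_mul_cos_add_sin_mul_cos_add_two_pi_div_three_add_sin_mul_cos_sub φ)
  nlinarith
end

section
/- For all r > 0 and φ ∈ [0, π/3], F(r,φ) := -sin φ - e^{-r√3 sin(φ+π/3)} sin(φ + 2π/3) - e^{r√3 sin(φ-π/3)} sin(φ - 2π/3) ≤ 0. -/
/-!
With `s = sin φ ≥ 0`, `a = sin (π/3 - φ) ≥ 0` and `t = r√3`, the addition formulas turn the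
claim into `e^{-ta} (s + a) ≤ s + a e^{-t(s+a)}`, i.e. `a e^{-ta} (1 - e^{-ts}) ≤ s (1 - e^{-ta})`.
Multiplied by `t`, this is the product of `1 - e^{-x} ≤ x` (with `x = ts`) and
`y e^{-y} ≤ 1 - e^{-y}` (with `y = ta`), both forms of `1 + x ≤ e^x`.
-/

open Real

lemma mul_exp_neg_le_one_sub_exp_neg (y : ℝ) : y * exp (-y) ≤ 1 - exp (-y) := by
  have h : (y + 1) * exp (-y) ≤ exp y * exp (-y) :=
    mul_le_mul_of_nonneg_right (add_one_le_exp y) (exp_pos _).le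
  rw [← exp_add, add_neg_cancel, exp_zero] at h
  linarith

lemma mul_exp_neg_mul_one_sub_exp_neg_le {x y : ℝ} (hx : 0 ≤ x) (hy : 0 ≤ y) :
    y * exp (-y) * (1 - exp (-x)) ≤ x * (1 - exp (-y)) := by
  have hx' : 0 ≤ 1 - exp (-x) := sub_nonneg.2 (exp_le_one_iff.2 (neg_nonpos.2 hx))
  have hy' : 0 ≤ 1 - exp (-y) := sub_nonneg.2 (exp_le_one_iff.2 (neg_nonpos.2 hy))
  calc y * exp (-y) * (1 - exp (-x))
      ≤ (1 - exp (-y)) * x :=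
        mul_le_mul (mul_exp_neg_le_one_sub_exp_neg y) (by linarith [one_sub_le_exp_neg x]) hx' hy'
    _ = x * (1 - exp (-y)) := mul_comm _ _

lemma exp_neg_mul_mul_add_le {t s a : ℝ} (ht : 0 < t) (hs : 0 ≤ s) (ha : 0 ≤ a) :
    exp (-(t * a)) * (s + a) ≤ s + a * exp (-(t * (s + a))) := by
  have hscaled := mul_exp_neg_mul_one_sub_exp_neg_le (mul_nonneg ht.le hs) (mul_nonneg ht.le ha)
  have hcancel : a * exp (-(t * a)) * (1 - exp (-(t * s))) ≤ s * (1 - exp (-(t * a))) :=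
    le_of_mul_le_mul_left (by linarith [hscaled]) ht
  have hsplit : exp (-(t * (s + a))) = exp (-(t * s)) * exp (-(t * a)) := by
    rw [← exp_add]; ring_nf
  rw [hsplit]
  linear_combination hcancel

lemma sin_add_two_pi_div_three (φ : ℝ) : sin (φ + 2 * π / 3) = sin (π / 3 - φ) := by
  rw [← sin_pi_sub]; ring_nf

lemma sin_add_pi_div_three (φ : ℝ) : sin (φ + π / 3) = sin φ + sin (π / 3 - φ) := by
  rw [sin_add, sin_sub, sin_pi_div_three, cos_pi_div_three]; ring

lemma sin_sub_two_pi_div_three (φ : ℝ) :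
    sin (φ - 2 * π / 3) = -(sin φ + sin (π / 3 - φ)) := by
  rw [← sin_add_pi_div_three, ← sin_sub_pi]; congr 1; ring

lemma sin_sub_pi_div_three (φ : ℝ) : sin (φ - π / 3) = -sin (π / 3 - φ) := by
  rw [← sin_neg, neg_sub]

theorem stmt_10 (r φ : ℝ) (hr : 0 < r) (hφ : φ ∈ Set.Icc 0 (Real.pi / 3)) :
    -Real.sin φ -
      Real.exp (-(r * Real.sqrt 3 * Real.sin (φ + Real.pi / 3))) * Real.sin (φ + 2 * Real.pi / 3) -
      Real.exp (r * Real.sqrt 3 * Real.sin (φ - Real.pi / 3)) * Real.sin (φ - 2 * Real.pi / 3)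
      ≤ 0 := by
  obtain ⟨hφ₀, hφ₁⟩ := hφ
  have hs : 0 ≤ sin φ := sin_nonneg_of_nonneg_of_le_pi hφ₀ (by linarith [pi_pos])
  have ha : 0 ≤ sin (π / 3 - φ) := sin_nonneg_of_nonneg_of_le_pi (by linarith) (by linarith)
  have ht : 0 < r * √3 := mul_pos hr (sqrt_pos.2 three_pos)
  have key := exp_neg_mul_mul_add_le ht hs ha
  rw [sin_add_pi_div_three, sin_add_two_pi_div_three, sin_sub_two_pi_div_three,
    sin_sub_pi_div_three, mul_neg (r * √3)]
  linear_combination key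
end

section
/- There exist positive reals y1, y2, y3, a1, a2, a3 with y1*y2*y3 = a1*a2*a3 and y1+y2+y3 ≥ a1+a2+a3 such that (log y1)^2 + (log y2)^2 + (log y3)^2 < (log a1)^2 + (log a2)^2 + (log a3)^2. (For example y1 = e^6, y2 = 1, y3 = e^{-6}, a1 = a2 = e^4, a3 = e^{-8}.) -/
/-! In logarithmic coordinates the example is `(6, 0, -6)` against `(4, 4, -8)`: equal sums, so equal
products, while the squared norms are `72 < 96`. The sum condition holds because
`exp 6 ≥ 3 exp 4` already dominates `2 exp 4`, and `exp (-8) ≤ exp (-6)`. -/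

open Real

lemma three_mul_exp_le_exp_add_two (a : ℝ) : 3 * exp a ≤ exp (a + 2) := by
  have h : 3 ≤ exp 2 := by linarith [add_one_le_exp (2 : ℝ)]
  rw [exp_add]
  nlinarith [exp_pos a]

theorem stmt_16 :
    ∃ y1 y2 y3 a1 a2 a3 : ℝ, 0 < y1 ∧ 0 < y2 ∧ 0 < y3 ∧ 0 < a1 ∧ 0 < a2 ∧ 0 < a3 ∧
      y1 * y2 * y3 = a1 * a2 * a3 ∧ y1 + y2 + y3 ≥ a1 + a2 + a3 ∧
      (Real.log y1)^2 + (Real.log y2)^2 + (Real.log y3)^2 <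
        (Real.log a1)^2 + (Real.log a2)^2 + (Real.log a3)^2 := by
  refine ⟨exp 6, exp 0, exp (-6), exp 4, exp 4, exp (-8), exp_pos _, exp_pos _, exp_pos _,
    exp_pos _, exp_pos _, exp_pos _, ?_, ?_, ?_⟩
  · simp only [← exp_add]
    norm_num
  · have hlarge : 3 * exp 4 ≤ exp 6 := by
      convert three_mul_exp_le_exp_add_two 4 using 2
      norm_num
    have hsmall : exp (-8) ≤ exp (-6) := exp_le_exp.2 (by norm_num)
    linarith [exp_pos 4, exp_pos 0]
  · simp only [log_exp]
    norm_num
end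

section
/- There exist positive reals y1, y2, y3, a1, a2, a3 with y1+y2+y3 ≥ a1+a2+a3, y1*y2 + y1*y3 + y2*y3 ≥ a1*a2 + a1*a3 + a2*a3, and y1*y2*y3 ≥ a1*a2*a3, such that (log y1)^2 + (log y2)^2 + (log y3)^2 < (log a1)^2 + (log a2)^2 + (log a3)^2. (For example y2 = y3 = a1 = a2 = 1, y1 = e, a3 = e^{-2}.) -/
open Real

theorem stmt_17 :
    ∃ y1 y2 y3 a1 a2 a3 : ℝ, 0 < y1 ∧ 0 < y2 ∧ 0 < y3 ∧ 0 < a1 ∧ 0 < a2 ∧ 0 < a3 ∧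
      y1 + y2 + y3 ≥ a1 + a2 + a3 ∧
      y1 * y2 + y1 * y3 + y2 * y3 ≥ a1 * a2 + a1 * a3 + a2 * a3 ∧
      y1 * y2 * y3 ≥ a1 * a2 * a3 ∧
      (Real.log y1)^2 + (Real.log y2)^2 + (Real.log y3)^2 <
        (Real.log a1)^2 + (Real.log a2)^2 + (Real.log a3)^2 := by
  -- for `y = (u, 1, 1)` and `a = (1, 1, v)` all three symmetric inequalities reduce to `v ≤ u`
  have h : exp (-2) ≤ exp 1 := exp_le_exp.2 (by norm_num)
  refine ⟨exp 1, 1, 1, 1, 1, exp (-2), exp_pos _, one_pos, one_pos, one_pos, one_pos,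
    exp_pos _, ?_, ?_, ?_, ?_⟩
  · linarith
  · linarith
  · simpa using h
  · norm_num [log_exp]
end

section
/- There exist positive reals y1, y2, y3, y4, a1, a2, a3, a4 with y1*y2*y3*y4 = a1*a2*a3*a4, y1+y2+y3+y4 ≥ a1+a2+a3+a4, and the sum of all pairwise products of the y_i at least the sum of all pairwise products of the a_i, such that (log y1)^2 + (log y2)^2 + (log y3)^2 + (log y4)^2 < (log a1)^2 + (log a2)^2 + (log a3)^2 + (log a4)^2. (For example y1 = e, y2 = y3 = e^7, y4 = e^{-15}, a1 = a2 = e^6, a3 = e^7, a4 = e^{-19}.) -/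
/-!
Take every number to be a power of `3`: `y = 3^(1, 7, 7, -15)` and `a = 3^(6, 6, 7, -19)`.
Both exponent vectors sum to `0`, so the products agree; the largest terms `3^7` and `3^14`
make the first two elementary symmetric functions of `y` dominate those of `a`; and the
squared logarithms are `(log 3)^2` times `1 + 49 + 49 + 225 = 324 < 482 = 36 + 36 + 49 + 361`.
-/

lemma Real.log_zpow_sq (b : ℝ) (m : ℤ) : Real.log (b ^ m) ^ 2 = (m : ℝ) ^ 2 * Real.log b ^ 2 := by
  rw [Real.log_zpow, mul_pow]

theorem stmt_18 :
    ∃ y1 y2 y3 y4 a1 a2 a3 a4 : ℝ,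
      0 < y1 ∧ 0 < y2 ∧ 0 < y3 ∧ 0 < y4 ∧ 0 < a1 ∧ 0 < a2 ∧ 0 < a3 ∧ 0 < a4 ∧
      y1 * y2 * y3 * y4 = a1 * a2 * a3 * a4 ∧
      y1 + y2 + y3 + y4 ≥ a1 + a2 + a3 + a4 ∧
      y1 * y2 + y1 * y3 + y1 * y4 + y2 * y3 + y2 * y4 + y3 * y4 ≥
        a1 * a2 + a1 * a3 + a1 * a4 + a2 * a3 + a2 * a4 + a3 * a4 ∧
      (Real.log y1)^2 + (Real.log y2)^2 + (Real.log y3)^2 + (Real.log y4)^2 <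
        (Real.log a1)^2 + (Real.log a2)^2 + (Real.log a3)^2 + (Real.log a4)^2 := by
  refine ⟨3 ^ (1 : ℤ), 3 ^ (7 : ℤ), 3 ^ (7 : ℤ), 3 ^ (-15 : ℤ),
    3 ^ (6 : ℤ), 3 ^ (6 : ℤ), 3 ^ (7 : ℤ), 3 ^ (-19 : ℤ),
    by positivity, by positivity, by positivity, by positivity,
    by positivity, by positivity, by positivity, by positivity,
    by norm_num, by norm_num, by norm_num, ?_⟩
  have hlog : 0 < Real.log 3 ^ 2 := pow_pos (Real.log_pos (by norm_num)) 2
  simp only [Real.log_zpow_sq]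
  norm_num
  linarith
end

section
/- There exist real triples z1 > z2 > z3 and c1 > c2 > c3 with z1+z2+z3 = c1+c2+c3 = 0, e^{z1}+e^{z2}+e^{z3} > e^{c1}+e^{c2}+e^{c3}, and e^{-z1}+e^{-z2}+e^{-z3} > e^{-c1}+e^{-c2}+e^{-c3}, but z1 < c1, so that (z1,z2,z3) does not majorize (c1,c2,c3). (For example z1 = 1/2 + 0.95/(2√3), z2 = 1/2 + 0.85/(2√3), z3 = -1 - 0.9/√3, c1 = 1/2 + 1/(2√3), c2 = -1/2 + 1/(2√3), c3 = -1/√3.) -/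
/-!
On `[-1, 1]` the exponential agrees with its cubic Taylor polynomial up to `5 x⁴ / 96`.
For families with equal sums, `∑ exp (±zᵢ) - ∑ exp (±cᵢ)` is therefore half the difference of
the second moments, up to the difference of the third moments over six and a quartic error.
The triple `z = (0.6, 0.4, -1)` has a much larger second moment than `c = (0.7, -0.3, -0.4)`,
and so wins both comparisons although `z₁ < c₁`.
-/

open Finset Real

lemma abs_exp_sub_cubic_taylor_le {x : ℝ} (hx : |x| ≤ 1) :
    |exp x - (1 + x + x ^ 2 / 2 + x ^ 3 / 6)| ≤ 5 / 96 * x ^ 4 := by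
  have h := Real.exp_bound hx (n := 4) (by norm_num)
  rw [(by decide : Even 4).pow_abs] at h
  convert h using 1
  · simp only [sum_range_succ, sum_range_zero, Nat.factorial]
    push_cast
    ring_nf
  · norm_num [Nat.factorial]
    ring

section Moments

variable {ι : Type*} (s : Finset ι) {z c : ι → ℝ}

lemma sum_exp_lt_sum_exp_of_moments (hz : ∀ i ∈ s, |z i| ≤ 1) (hc : ∀ i ∈ s, |c i| ≤ 1)
    (hsum : ∑ i ∈ s, z i = ∑ i ∈ s, c i)
    (hmom : (∑ i ∈ s, c i ^ 3 - ∑ i ∈ s, z i ^ 3) / 6 +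
        5 / 96 * (∑ i ∈ s, z i ^ 4 + ∑ i ∈ s, c i ^ 4) <
      (∑ i ∈ s, z i ^ 2 - ∑ i ∈ s, c i ^ 2) / 2) :
    ∑ i ∈ s, exp (c i) < ∑ i ∈ s, exp (z i) := by
  have hz_lower : ∀ i ∈ s,
      1 + z i + z i ^ 2 / 2 + z i ^ 3 / 6 - 5 / 96 * z i ^ 4 ≤ exp (z i) := fun i hi => by
    linarith [(abs_le.mp (abs_exp_sub_cubic_taylor_le (hz i hi))).1]
  have hc_upper : ∀ i ∈ s,
      exp (c i) ≤ 1 + c i + c i ^ 2 / 2 + c i ^ 3 / 6 + 5 / 96 * c i ^ 4 := fun i hi => by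
    linarith [(abs_le.mp (abs_exp_sub_cubic_taylor_le (hc i hi))).2]
  have hz_sum := sum_le_sum hz_lower
  have hc_sum := sum_le_sum hc_upper
  simp only [sum_add_distrib, sum_sub_distrib, ← sum_div, ← mul_sum] at hz_sum hc_sum
  linarith

lemma sum_exp_lt_sum_exp_and_neg_of_moments (hz : ∀ i ∈ s, |z i| ≤ 1)
    (hc : ∀ i ∈ s, |c i| ≤ 1) (hsum : ∑ i ∈ s, z i = ∑ i ∈ s, c i)
    (hmom : |∑ i ∈ s, c i ^ 3 - ∑ i ∈ s, z i ^ 3| / 6 +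
        5 / 96 * (∑ i ∈ s, z i ^ 4 + ∑ i ∈ s, c i ^ 4) <
      (∑ i ∈ s, z i ^ 2 - ∑ i ∈ s, c i ^ 2) / 2) :
    ∑ i ∈ s, exp (c i) < ∑ i ∈ s, exp (z i) ∧
      ∑ i ∈ s, exp (-c i) < ∑ i ∈ s, exp (-z i) := by
  refine ⟨sum_exp_lt_sum_exp_of_moments s hz hc hsum ?_,
    sum_exp_lt_sum_exp_of_moments s (z := (- z ·)) (c := (- c ·)) ?_ ?_ ?_ ?_⟩
  · linarith [le_abs_self (∑ i ∈ s, c i ^ 3 - ∑ i ∈ s, z i ^ 3)]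
  · simpa only [abs_neg] using hz
  · simpa only [abs_neg] using hc
  · simp only [sum_neg_distrib, hsum]
  · simp only [neg_sq, Odd.neg_pow (by decide : Odd 3), Even.neg_pow (by decide : Even 4),
      sum_neg_distrib]
    linarith [neg_abs_le (∑ i ∈ s, c i ^ 3 - ∑ i ∈ s, z i ^ 3)]

end Moments

theorem stmt_19 :
    ∃ z1 z2 z3 c1 c2 c3 : ℝ,
      z1 > z2 ∧ z2 > z3 ∧ c1 > c2 ∧ c2 > c3 ∧
      z1 + z2 + z3 = 0 ∧ c1 + c2 + c3 = 0 ∧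
      Real.exp z1 + Real.exp z2 + Real.exp z3 > Real.exp c1 + Real.exp c2 + Real.exp c3 ∧
      Real.exp (-z1) + Real.exp (-z2) + Real.exp (-z3) >
        Real.exp (-c1) + Real.exp (-c2) + Real.exp (-c3) ∧
      z1 < c1 := by
  obtain ⟨hexp, hexp_neg⟩ := sum_exp_lt_sum_exp_and_neg_of_moments univ
    (z := ![0.6, 0.4, -1]) (c := ![0.7, -0.3, -0.4])
    (by norm_num [Fin.forall_fin_succ, abs_le, Matrix.cons_val])
    (by norm_num [Fin.forall_fin_succ, abs_le, Matrix.cons_val])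
    (by norm_num [Fin.sum_univ_three, Matrix.cons_val_two, Matrix.tail_cons])
    (by norm_num [Fin.sum_univ_three, Matrix.cons_val_two, Matrix.tail_cons, abs_of_neg])
  simp only [Fin.sum_univ_three, Matrix.cons_val] at hexp hexp_neg
  exact ⟨0.6, 0.4, -1, 0.7, -0.3, -0.4, by norm_num, by norm_num, by norm_num, by norm_num,
    by norm_num, by norm_num, hexp, hexp_neg, by norm_num⟩
end
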